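/- arXiv:2303.11451 — 6 statements merged into one kernel-verified Lean document; each statement's English description precedes it below -/
import Mathlib

section
/- Let P be a poset and α > 0 a limit ordinal. For f ∈ P^α define I(f) = {s ∈ P^{<α} : there exists β < α with s ≤ f↾β in P^{<α}}, an initial segment of the quasi-order P^{<α}. Then the map f ↦ I(f) from P^α into I(P^{<α}) is order-generating: for all f, g ∈ P^α, if I(f) ⊆ I(g) then f ≤ g in P^α. -/
/-!
That `I(f)` is an initial segment is transitivity of embeddability. For the main part, as `α` is
a limit, `f↾(γ+1) ∈ I(f) ⊆ I(g)` for every `γ < α`, so `f↾(γ+1)` embeds into `g`. Send `γ` to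
the least possible image of its last point under such an embedding. This map is strictly
increasing: for `γ < γ'`, restricting an optimal embedding of `f↾(γ'+1)` embeds `f↾(γ+1)` with
`γ` sent strictly below the image of `γ'`.
-/

universe u v

open Set

/-- `r` is an initial segment of `X ⊆ ℕ`: `r ⊆ X` and every element of `X` not in `r`
is greater than every element of `r`. -/
def NatInitSeg (r : Finset ℕ) (X : Set ℕ) : Prop :=
  ↑r ⊆ X ∧ ∀ x ∈ X, x ∉ r → ∀ y ∈ r, y < x

/-- `B` is a barrier: an infinite inclusion-antichain of finite subsets of `ℕ` such that
every infinite subset of the base has an initial segment in `B`. -/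
def IsBarrier (B : Set (Finset ℕ)) : Prop :=
  B.Infinite ∧
  (∀ x ∈ B, ∀ y ∈ B, x ⊆ y → x = y) ∧
  (∀ X : Set ℕ, X ⊆ (⋃ b ∈ B, (↑b : Set ℕ)) → X.Infinite → ∃ r ∈ B, NatInitSeg r X)

/-- `t` is a proper initial segment of the finite set `s`. -/
def FinsetProperInitSeg (t s : Finset ℕ) : Prop :=
  t ⊆ s ∧ t ≠ s ∧ ∀ x ∈ s, x ∉ t → ∀ y ∈ t, y < x

/-- The shift-extension relation `r ◁ s`: `min r < min s` and `r \ {min r}` is a proper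
initial segment of `s`. -/
def ShiftExt (r s : Finset ℕ) : Prop :=
  ∃ m ∈ r, (∀ x ∈ r, m ≤ x) ∧ (∀ y ∈ s, m < y) ∧ FinsetProperInitSeg (r.erase m) s

/-- A map `f` from a barrier `B` into `X` is good for the relation `le`. -/
def GoodOn {X : Type*} (le : X → X → Prop) (B : Set (Finset ℕ)) (f : Finset ℕ → X) : Prop :=
  ∃ s ∈ B, ∃ t ∈ B, ShiftExt s t ∧ le (f s) (f t)

/-- Well quasi-order for a relation: every `ℕ`-sequence is good. -/
def IsWqoRel {X : Type*} (le : X → X → Prop) : Prop :=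
  ∀ p : ℕ → X, ∃ i j : ℕ, i < j ∧ le (p i) (p j)

/-- Better quasi-order: every map from every barrier is good. -/
def IsBqoRel {X : Type*} (le : X → X → Prop) : Prop :=
  ∀ B : Set (Finset ℕ), IsBarrier B → ∀ f : Finset ℕ → X, GoodOn le B f

/-- The (strict) lexicographic order on finite subsets of `ℕ`:
`r < s` iff `r ≠ s` and the least element of the symmetric difference belongs to `r`. -/
def FinsetLexLt (r s : Finset ℕ) : Prop :=
  r ≠ s ∧ ∀ m ∈ symmDiff r s, (∀ x ∈ symmDiff r s, m ≤ x) → m ∈ r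

/-- The barrier `B` has lexicographic order type `≤ α`: there is a lex-strictly-increasing
ordinal-valued function on `B` bounded by `α`. -/
def BarrierTypeLE (B : Set (Finset ℕ)) (α : Ordinal.{0}) : Prop :=
  ∃ g : Finset ℕ → Ordinal.{0}, (∀ b ∈ B, g b < α) ∧
    ∀ b₁ ∈ B, ∀ b₂ ∈ B, FinsetLexLt b₁ b₂ → g b₁ < g b₂

/-- `α`-wqo: every map from a barrier of order type `≤ α` is good. -/
def IsAlphaWqoRel {X : Type*} (le : X → X → Prop) (α : Ordinal.{0}) : Prop :=
  ∀ B : Set (Finset ℕ), IsBarrier B → BarrierTypeLE B α →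
    ∀ f : Finset ℕ → X, GoodOn le B f

/-- `σ`-bqo: a wqo which is a countable union of sets, each bqo in the induced order. -/
def IsSigmaBqoRel {X : Type*} (le : X → X → Prop) : Prop :=
  IsWqoRel le ∧
  ∃ S : ℕ → Set X, (⋃ n, S n) = Set.univ ∧
    ∀ n, IsBqoRel (fun x y : S n => le x.1 y.1)

/-- Sequences of length `α` from `P`. -/
abbrev OrdSeq (P : Type u) (α : Ordinal.{0}) := {β : Ordinal.{0} // β < α} → P

/-- The embeddability quasi-order on `P^α`. -/
def OrdSeqLE {P : Type u} [Preorder P] {α : Ordinal.{0}} (f g : OrdSeq P α) : Prop :=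
  ∃ ρ : {β : Ordinal.{0} // β < α} → {β : Ordinal.{0} // β < α},
    StrictMono ρ ∧ ∀ γ, f γ ≤ g (ρ γ)

/-- Sequences of length `< α` from `P`. -/
abbrev OrdSeqLt (P : Type u) (α : Ordinal.{0}) :=
  Σ β : {β : Ordinal.{0} // β < α}, ({γ : Ordinal.{0} // γ < β.1} → P)

/-- The embeddability quasi-order on `P^{<α}`. -/
def OrdSeqLtLE {P : Type u} [Preorder P] {α : Ordinal.{0}} (f g : OrdSeqLt P α) : Prop :=
  ∃ ρ : {γ : Ordinal.{0} // γ < f.1.1} → {γ : Ordinal.{0} // γ < g.1.1},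
    StrictMono ρ ∧ ∀ δ, f.2 δ ≤ g.2 (ρ δ)

/-- The Dress–Schiffels relation: `f ≤DS g` iff `f i < g i` for every `i` maximal in
`Δ(f,g) = {j | f j ≠ g j}`. -/
def DSle {I : Type u} [PartialOrder I] {P : I → Type v} [∀ i, PartialOrder (P i)]
    (f g : ∀ i, P i) : Prop :=
  ∀ i : I, Maximal (fun j => f j ≠ g j) i → f i < g i

/-- The underlying set of the Dress–Schiffels product: finitely supported functions. -/
abbrev DSProd (I : Type u) [PartialOrder I] (P : I → Type v) [∀ i, PartialOrder (P i)]
    [∀ i, OrderBot (P i)] :=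
  {f : ∀ i, P i // {i | f i ≠ ⊥}.Finite}

theorem exists_strictMono_of_forall_Iic_embeds {ι κ P : Type*} [Preorder ι] [LinearOrder κ]
    [WellFoundedLT κ] [Preorder P] (f : ι → P) (g : κ → P)
    (h : ∀ i, ∃ σ : Iic i → κ, StrictMono σ ∧ ∀ x : Iic i, f x.1 ≤ g (σ x)) :
    ∃ ρ : ι → κ, StrictMono ρ ∧ ∀ i, f i ≤ g (ρ i) := by
  let tops (i : ι) : Set κ :=
    {k | ∃ σ : Iic i → κ, StrictMono σ ∧ (∀ x : Iic i, f x.1 ≤ g (σ x)) ∧ σ ⟨i, self_mem_Iic⟩ = k}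
  have tops_nonempty (i : ι) : (tops i).Nonempty := by
    obtain ⟨σ, hσ, hfg⟩ := h i
    exact ⟨_, σ, hσ, hfg, rfl⟩
  let ρ (i : ι) : κ := wellFounded_lt.min (tops i) (tops_nonempty i)
  have ρ_mem (i : ι) : ρ i ∈ tops i := wellFounded_lt.min_mem _ _
  refine ⟨ρ, fun i j hij => ?_, fun i => ?_⟩
  · obtain ⟨σ, hσ, hfg, hσj⟩ := ρ_mem j
    have restrict_mem : σ ⟨i, hij.le⟩ ∈ tops i :=
      ⟨fun x => σ ⟨x, x.2.trans hij.le⟩, fun x y hxy => hσ hxy, fun x => hfg ⟨x, _⟩, rfl⟩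
    calc ρ i ≤ σ ⟨i, hij.le⟩ := wellFounded_lt.min_le restrict_mem
      _ < σ ⟨j, self_mem_Iic⟩ := hσ hij
      _ = ρ j := hσj
  · obtain ⟨σ, -, hfg, hσi⟩ := ρ_mem i
    exact hσi ▸ hfg ⟨i, self_mem_Iic⟩

section OrdSeq

variable {P : Type u} [Preorder P] {α : Ordinal.{0}}

def OrdSeq.restrict (f : OrdSeq P α) (β : {β : Ordinal.{0} // β < α}) : OrdSeqLt P α :=
  ⟨β, fun γ => f ⟨γ.1, γ.2.trans β.2⟩⟩

theorem OrdSeqLtLE.refl (s : OrdSeqLt P α) : OrdSeqLtLE s s :=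
  ⟨id, strictMono_id, fun _ => le_rfl⟩

theorem OrdSeqLtLE.trans {s t r : OrdSeqLt P α} (hst : OrdSeqLtLE s t) (htr : OrdSeqLtLE t r) :
    OrdSeqLtLE s r := by
  obtain ⟨ρ, hρ, hle⟩ := hst
  obtain ⟨ρ', hρ', hle'⟩ := htr
  exact ⟨ρ' ∘ ρ, hρ'.comp hρ, fun δ => (hle δ).trans (hle' (ρ δ))⟩

theorem OrdSeq.exists_embedding_Iic_of_restrict_succ_le (f g : OrdSeq P α)
    (γ β : {β : Ordinal.{0} // β < α}) (hγ : Order.succ γ.1 < α)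
    (h : OrdSeqLtLE (f.restrict ⟨Order.succ γ.1, hγ⟩) (g.restrict β)) :
    ∃ σ : Iic γ → {β : Ordinal.{0} // β < α}, StrictMono σ ∧ ∀ x : Iic γ, f x.1 ≤ g (σ x) := by
  obtain ⟨ρ, hρ, hle⟩ := h
  let incl : Iic γ → {x : Ordinal.{0} // x < Order.succ γ.1} :=
    fun x => ⟨x.1.1, Order.lt_succ_iff.mpr x.2⟩
  exact ⟨fun x => ⟨(ρ (incl x)).1, (ρ (incl x)).2.trans β.2⟩,
    fun x y hxy => hρ (show incl x < incl y from hxy), fun x => hle (incl x)⟩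

end OrdSeq

/-- For a limit ordinal `α > 0`, the map `f ↦ I(f)` sending `f ∈ P^α` to the initial
segment of `P^{<α}` generated by its proper restrictions is order-generating. -/
theorem stmt_2 {P : Type u} [PartialOrder P] (α : Ordinal.{0}) (hα : Order.IsSuccLimit α)
    (Iseg : OrdSeq P α → Set (OrdSeqLt P α))
    (hI : ∀ f, Iseg f = {s | ∃ β : {β : Ordinal.{0} // β < α},
      OrdSeqLtLE s ⟨β, fun γ => f ⟨γ.1, γ.2.trans β.2⟩⟩}) :
    (∀ f : OrdSeq P α, ∀ s t : OrdSeqLt P α, OrdSeqLtLE s t → t ∈ Iseg f → s ∈ Iseg f) ∧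
    (∀ f g : OrdSeq P α, Iseg f ⊆ Iseg g → OrdSeqLE f g) := by
  simp only [hI]
  refine ⟨fun f s t hst ⟨β, htf⟩ => ⟨β, hst.trans htf⟩, fun f g hfg => ?_⟩
  refine exists_strictMono_of_forall_Iic_embeds f g fun γ => ?_
  have hγ : Order.succ γ.1 < α := hα.succ_lt γ.2
  obtain ⟨β, hβ⟩ := hfg ⟨_, OrdSeqLtLE.refl (f.restrict ⟨_, hγ⟩)⟩
  exact f.exists_embedding_Iic_of_restrict_succ_le g γ β hγ hβ
end

section
/- Let Q be a wqo poset and n ≥ 1 a natural number. Let A_n be the set of n-tuples ⟨x_i : i < n⟩ of elements of Q whose entries are pairwise incomparable (an antichain), ordered coordinatewise (⟨x_i⟩ ≤ ⟨y_i⟩ iff x_i ≤_Q y_i for all i < n), and let Q_n be the set of initial segments A of Q such that Q \ A has exactly n minimal elements, ordered by inclusion. Then the map F(⟨x_i : i < n⟩) = {y ∈ Q : there is no i < n with x_i ≤_Q y} is an order-preserving surjection from A_n onto Q_n. -/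
universe u v

open Set

/-- For a wqo `Q` and `n ≥ 1`, the map `F(⟨x_i⟩) = {y | ¬∃ i, x_i ≤ y}` is an order-preserving
surjection from the set of `n`-element antichain tuples (ordered coordinatewise) onto the set
of initial segments whose complement has exactly `n` minimal elements (ordered by inclusion). -/
theorem stmt_5 {Q : Type u} [PartialOrder Q]
    (hQ : IsWqoRel ((· ≤ ·) : Q → Q → Prop)) (n : ℕ) (hn : 1 ≤ n)
    (F : (Fin n → Q) → Set Q) (hF : ∀ x, F x = {y | ¬ ∃ i, x i ≤ y}) :
    (∀ x : Fin n → Q, (∀ i j, i ≠ j → ¬ x i ≤ x j) →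
      ((∀ a b : Q, a ≤ b → b ∈ F x → a ∈ F x) ∧
        {m | Minimal (· ∈ (F x)ᶜ) m}.ncard = n)) ∧
    (∀ A : Set Q, (∀ a b : Q, a ≤ b → b ∈ A → a ∈ A) →
      {m | Minimal (· ∈ Aᶜ) m}.ncard = n →
      ∃ x : Fin n → Q, (∀ i j, i ≠ j → ¬ x i ≤ x j) ∧ F x = A) ∧
    (∀ x y : Fin n → Q, (∀ i j, i ≠ j → ¬ x i ≤ x j) → (∀ i j, i ≠ j → ¬ y i ≤ y j) →
      (∀ i, x i ≤ y i) → F x ⊆ F y) := by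
  -- well-foundedness of `<` from wqo
  have hwf : WellFounded ((· < ·) : Q → Q → Prop) := by
    rw [RelEmbedding.wellFounded_iff_isEmpty]
    constructor
    intro f
    obtain ⟨i, j, hij, hle⟩ := hQ f
    have : f j < f i := f.map_rel_iff.2 hij
    exact absurd hle (not_le_of_gt this)
  -- every element outside an arbitrary set A has a minimal element of Aᶜ below it
  have hmin : ∀ (A : Set Q), ∀ y ∉ A, ∃ m, Minimal (· ∈ Aᶜ) m ∧ m ≤ y := by
    intro A y hy
    obtain ⟨m, ⟨hmA, hmy⟩, hm⟩ := hwf.has_min {z | z ∈ Aᶜ ∧ z ≤ y} ⟨y, hy, le_refl y⟩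
    refine ⟨m, ⟨hmA, fun z hz hzm => ?_⟩, hmy⟩
    rcases hzm.lt_or_eq with h | h
    · exact absurd h (hm z ⟨hz, hzm.trans hmy⟩)
    · exact h.ge
  refine ⟨?_, ?_, ?_⟩
  · -- part 1
    intro x hx
    have hmem : ∀ z, z ∈ (F x)ᶜ ↔ ∃ i, x i ≤ z := by
      intro z; simp [hF]
    constructor
    · intro a b hab hb
      rw [hF] at hb ⊢
      intro ⟨i, hi⟩
      exact hb ⟨i, hi.trans hab⟩
    · have hxi : Function.Injective x := by
        intro i j hij
        by_contra hne
        exact hx i j hne hij.le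
      have hset : {m | Minimal (· ∈ (F x)ᶜ) m} = Set.range x := by
        ext m
        constructor
        · rintro ⟨hm, hm'⟩
          obtain ⟨i, hi⟩ := (hmem m).1 hm
          have : m ≤ x i := hm' ((hmem (x i)).2 ⟨i, le_refl _⟩) hi
          exact ⟨i, le_antisymm hi this⟩
        · rintro ⟨i, rfl⟩
          refine ⟨(hmem (x i)).2 ⟨i, le_refl _⟩, fun z hz hzi => ?_⟩
          obtain ⟨j, hj⟩ := (hmem z).1 hz
          have hji : x j ≤ x i := hj.trans hzi
          by_cases h : j = i
          · subst h; exact le_antisymm hji (hj.trans hzi) ▸ hj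
          · exact absurd hji (hx j i h)
      rw [hset]
      have : Set.range x = x '' Set.univ := (Set.image_univ).symm
      rw [this, Set.ncard_image_of_injective _ hxi, Set.ncard_univ]
      simp
  · -- part 2 (surjectivity)
    intro A hA hcard
    set M := {m | Minimal (· ∈ Aᶜ) m} with hMdef
    have hfin : M.Finite := by
      apply Set.finite_of_ncard_ne_zero
      omega
    have hcard' : hfin.toFinset.card = n := by
      rw [← Set.ncard_eq_toFinset_card M hfin]; exact hcard
    set e := hfin.toFinset.equivFinOfCardEq hcard' with hedef
    set x : Fin n → Q := fun i => (e.symm i).1 with hxdef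
    have hxM : ∀ i, x i ∈ M := fun i => (Set.Finite.mem_toFinset hfin).1 (e.symm i).2
    have hanti : ∀ i j, i ≠ j → ¬ x i ≤ x j := by
      intro i j hij hle
      have h1 := hxM i
      have h2 := hxM j
      have : x j ≤ x i := h2.2 h1.1 hle
      have hxx : x i = x j := le_antisymm hle this
      apply hij
      have : e.symm i = e.symm j := Subtype.ext hxx
      simpa using congrArg e this
    refine ⟨x, hanti, ?_⟩
    ext y
    rw [hF]
    simp only [Set.mem_setOf_eq]
    constructor
    · intro hy
      by_contra hyA
      obtain ⟨m, hmM, hmy⟩ := hmin A y hyA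
      have hmM' : m ∈ hfin.toFinset := (Set.Finite.mem_toFinset hfin).2 hmM
      exact hy ⟨e ⟨m, hmM'⟩, by simpa [hxdef] using hmy⟩
    · intro hy ⟨i, hi⟩
      exact (hxM i).1 (hA (x i) y hi hy)
  · -- part 3
    intro x y hx hy hxy
    intro z hz
    rw [hF] at hz ⊢
    intro ⟨i, hi⟩
    exact hz ⟨i, (hxy i).trans hi⟩
end

section
/- If P and Q are σ-bqo posets, then the product P × Q with the coordinatewise order ((p,q) ≤ (p',q') iff p ≤_P p' and q ≤_Q q') is σ-bqo; more generally, any finite product of σ-bqo posets with the coordinatewise order is σ-bqo. -/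
universe u v

open Set

/-!
The wqo half of `σ`-bqo is Dickson's lemma, and a finite product of countable covers by bqo
pieces is a countable cover by products of those pieces; so everything rests on the fact that a
product of two bqos is bqo.

Let `f : B → A × C` on a barrier `B`. The pairs `s ∪ t` with `s, t ∈ B` and `s ◁ t` form a barrier
`B²`, and `s ∪ t ◁ s' ∪ t'` in `B²` forces `t = s'`. Colour `s ∪ t` by whether `(f s).1 ≤ (f t).1`.
By the Nash-Williams partition theorem (proved by the Galvin–Prikry accept/reject argument and a
fusion) some sub-barrier of `B²` is monochromatic. It cannot avoid the colour, since `A` is bqo for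
`u ↦ (f s_u).1`; so it lies inside the colour, and `C` being bqo for `u ↦ (f s_u).2` produces
`s ◁ t` with `f s ≤ f t` in both coordinates.
-/

section InitialSegments

theorem NatInitSeg.subset_or_subset {r s : Finset ℕ} {X : Set ℕ} (hr : NatInitSeg r X)
    (hs : NatInitSeg s X) : r ⊆ s ∨ s ⊆ r := by
  by_contra! h
  obtain ⟨x, hxr, hxs⟩ := Finset.not_subset.1 h.1
  obtain ⟨y, hys, hyr⟩ := Finset.not_subset.1 h.2
  exact lt_asymm (hs.2 x (hr.1 hxr) hxs y hys) (hr.2 y (hs.1 hys) hyr x hxr)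

theorem natInitSeg_empty (X : Set ℕ) : NatInitSeg ∅ X := by
  simp [NatInitSeg]

theorem NatInitSeg.erase {r : Finset ℕ} {X : Set ℕ} (hr : NatInitSeg r X) (a : ℕ) :
    NatInitSeg (r.erase a) (X \ {a}) := by
  refine ⟨fun x hx => ?_, fun x hx hxr y hy => ?_⟩
  · obtain ⟨hxa, hxr⟩ := Finset.mem_erase.1 hx
    exact ⟨hr.1 hxr, hxa⟩
  · exact hr.2 x hx.1 (fun h => hxr (Finset.mem_erase.2 ⟨hx.2, h⟩)) y (Finset.mem_of_mem_erase hy)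

theorem NatInitSeg.insert_sInf {r : Finset ℕ} {X : Set ℕ} (hX : X.Nonempty)
    (hr : NatInitSeg r (X \ {sInf X})) : NatInitSeg (insert (sInf X) r) X := by
  refine ⟨?_, fun x hx hxr y hy => ?_⟩
  · rw [Finset.coe_insert]
    exact insert_subset (Nat.sInf_mem hX) (hr.1.trans sdiff_subset)
  · have hxm : x ≠ sInf X := fun h => hxr (h ▸ Finset.mem_insert_self _ _)
    rcases Finset.mem_insert.1 hy with rfl | hy
    · exact (Nat.sInf_le hx).lt_of_ne' hxm
    · exact hr.2 x ⟨hx, hxm⟩ (fun h => hxr (Finset.mem_insert_of_mem h)) y hy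

def tailAbove (M : Set ℕ) (s : Finset ℕ) : Set ℕ := {x ∈ M | ∀ y ∈ s, y < x}

theorem tailAbove_subset (M : Set ℕ) (s : Finset ℕ) : tailAbove M s ⊆ M := fun _ hx => hx.1

theorem tailAbove_empty (M : Set ℕ) : tailAbove M ∅ = M := by
  simp [tailAbove]

theorem Set.Infinite.tailAbove {M : Set ℕ} (hM : M.Infinite) (s : Finset ℕ) :
    (_root_.tailAbove M s).Infinite :=
  (hM.sdiff (finite_Iic (s.sup id))).mono fun _ hx =>
    ⟨hx.1, fun _ hy => (Finset.le_sup (f := id) hy).trans_lt (not_le.1 hx.2)⟩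

theorem natInitSeg_union_tailAbove (M : Set ℕ) (s : Finset ℕ) :
    NatInitSeg s (↑s ∪ tailAbove M s) := by
  refine ⟨subset_union_left, fun x hx hxs y hy => ?_⟩
  rcases hx with hx | hx
  · exact absurd hx hxs
  · exact hx.2 y hy

end InitialSegments

section Fusion

variable {Φ : Finset ℕ → Set ℕ → Prop}

theorem exists_subset_forall_mem_finset (hmono : ∀ s M N, N ⊆ M → Φ s M → Φ s N)
    (hex : ∀ s M, M.Infinite → ∃ N ⊆ M, N.Infinite ∧ Φ s N) (L : Finset (Finset ℕ))
    {M : Set ℕ} (hM : M.Infinite) : ∃ N ⊆ M, N.Infinite ∧ ∀ s ∈ L, Φ s N := by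
  classical
  induction L using Finset.induction with
  | empty => exact ⟨M, subset_rfl, hM, by simp⟩
  | insert a L _ ih =>
    obtain ⟨N, hNM, hN, hΦ⟩ := ih
    obtain ⟨N', hN'N, hN', hΦa⟩ := hex a N hN
    refine ⟨N', hN'N.trans hNM, hN', fun s hs => ?_⟩
    rcases Finset.mem_insert.1 hs with rfl | hs
    exacts [hΦa, hmono s N N' hN'N (hΦ s hs)]

theorem exists_subset_forall_tailAbove (hmono : ∀ s M N, N ⊆ M → Φ s M → Φ s N)
    (hex : ∀ s M, M.Infinite → ∃ N ⊆ M, N.Infinite ∧ Φ s N) {M : Set ℕ} (hM : M.Infinite) :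
    ∃ N ⊆ M, N.Infinite ∧ ∀ s : Finset ℕ, ↑s ⊆ N → Φ s (tailAbove N s) := by
  obtain ⟨M₀, hM₀M, hM₀, hΦ₀⟩ := hex ∅ M hM
  have hstep : ∀ K : Set ℕ, K.Infinite → ∃ K' ⊆ K ∩ Ioi (sInf K), K'.Infinite ∧
      ∀ s ∈ (Finset.range (sInf K + 1)).powerset, Φ s K' := fun K hK =>
    exists_subset_forall_mem_finset hmono hex _ (hK.tailAbove {sInf K} |>.mono fun x hx =>
      ⟨hx.1, by simpa using hx.2⟩)
  choose! next hnext_sub hnext_inf hnext_Φ using hstep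
  -- Stage `K (k + 1)` lies above `min (K k)` and settles `Φ` for every subset of
  -- `{0, …, min (K k)}`; the minima of the stages form `N`.
  set K : ℕ → Set ℕ := fun k => next^[k] M₀
  have hK_succ : ∀ k, K (k + 1) = next (K k) := fun k => Function.iterate_succ_apply' _ _ _
  have hK_inf : ∀ k, (K k).Infinite := fun k => by
    induction k with
    | zero => exact hM₀
    | succ k ih => exact hK_succ k ▸ hnext_inf _ ih
  set a : ℕ → ℕ := fun k => sInf (K k)
  have ha_mem : ∀ k, a k ∈ K k := fun k => Nat.sInf_mem (hK_inf k).nonempty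
  have hK_anti : Antitone K := antitone_nat_of_succ_le fun k =>
    (hK_succ k ▸ hnext_sub _ (hK_inf k)).trans inter_subset_left
  have ha_mono : StrictMono a := strictMono_nat_of_lt_succ fun k =>
    (hnext_sub _ (hK_inf k) (hK_succ k ▸ ha_mem (k + 1))).2
  have hrange : range a ⊆ M₀ := range_subset_iff.2 fun k => hK_anti k.zero_le (ha_mem k)
  refine ⟨range a, hrange.trans hM₀M, infinite_range_of_injective ha_mono.injective,
    fun s hs => ?_⟩
  rcases s.eq_empty_or_nonempty with rfl | hne
  · rw [tailAbove_empty]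
    exact hmono _ _ _ hrange hΦ₀
  obtain ⟨k, hk⟩ := hs (s.max'_mem hne)
  refine hmono _ (K (k + 1)) _ ?_ (hK_succ k ▸ hnext_Φ _ (hK_inf k) s ?_)
  · rintro _ ⟨⟨j, rfl⟩, hj⟩
    exact hK_anti (ha_mono.lt_iff_lt.1 (hk ▸ hj _ (s.max'_mem hne))) (ha_mem j)
  · exact Finset.mem_powerset.2 fun y hy =>
      Finset.mem_range.2 (Nat.lt_succ_of_le ((s.le_max' y hy).trans_eq hk.symm))

end Fusion

section NashWilliams

variable (A : Set (Finset ℕ))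

def Accepts (s : Finset ℕ) (M : Set ℕ) : Prop :=
  ∀ X ⊆ M, X.Infinite → ∃ r, NatInitSeg r X ∧ s ∪ r ∈ A

def Rejects (s : Finset ℕ) (M : Set ℕ) : Prop :=
  ∀ N ⊆ M, N.Infinite → ¬Accepts A s N

variable {A} {s : Finset ℕ} {M N : Set ℕ}

theorem Accepts.mono (h : Accepts A s M) (hNM : N ⊆ M) : Accepts A s N :=
  fun X hX => h X (hX.trans hNM)

theorem Rejects.mono (h : Rejects A s M) (hNM : N ⊆ M) : Rejects A s N :=
  fun X hX => h X (hX.trans hNM)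

theorem accepts_of_mem (hs : s ∈ A) (M : Set ℕ) : Accepts A s M :=
  fun X _ _ => ⟨∅, natInitSeg_empty X, by rwa [Finset.union_empty]⟩

theorem exists_subset_accepts_or_rejects (s : Finset ℕ) (hM : M.Infinite) :
    ∃ N ⊆ M, N.Infinite ∧ (Accepts A s N ∨ Rejects A s N) := by
  by_cases h : Rejects A s M
  · exact ⟨M, subset_rfl, hM, Or.inr h⟩
  · simp only [Rejects, not_forall, not_not] at h
    obtain ⟨N, hNM, hN, hacc⟩ := h
    exact ⟨N, hNM, hN, Or.inl hacc⟩

/-- Otherwise those `n` would form an infinite set accepted by `s`. -/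
theorem Rejects.finite_accepts_insert (h : Rejects A s (tailAbove M s)) :
    {n ∈ tailAbove M s | Accepts A (insert n s) (tailAbove M (insert n s))}.Finite := by
  refine not_infinite.1 fun hinf => h _ (fun n hn => hn.1) hinf fun X hX hXi => ?_
  set n := sInf X
  have hnX : n ∈ X := Nat.sInf_mem hXi.nonempty
  have hXn : X \ {n} ⊆ tailAbove M (insert n s) := fun x hx =>
    ⟨(hX hx.1).1.1, Finset.forall_mem_insert _ _ _ |>.2
      ⟨(Nat.sInf_le hx.1).lt_of_ne' hx.2, (hX hx.1).1.2⟩⟩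
  obtain ⟨r, hr, hrA⟩ := (hX hnX).2 _ hXn (hXi.sdiff (finite_singleton n))
  refine ⟨insert n r, hr.insert_sInf hXi.nonempty, ?_⟩
  rwa [Finset.union_insert, ← Finset.insert_union]

/-- The Nash-Williams lemma (the open case of the Galvin–Prikry theorem). -/
theorem exists_subset_forall_natInitSeg_mem_or_forall_not_mem (A : Set (Finset ℕ))
    {M : Set ℕ} (hM : M.Infinite) :
    ∃ N ⊆ M, N.Infinite ∧
      ((∀ X ⊆ N, X.Infinite → ∃ r ∈ A, NatInitSeg r X) ∨ ∀ s : Finset ℕ, ↑s ⊆ N → s ∉ A) := by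
  obtain ⟨N₁, hN₁M, hN₁, hdecided⟩ :=
    exists_subset_forall_tailAbove (Φ := fun s K => Accepts A s K ∨ Rejects A s K)
      (fun _ _ _ h => Or.imp (·.mono h) (·.mono h))
      (fun s _ hK => exists_subset_accepts_or_rejects s hK) hM
  rcases tailAbove_empty N₁ ▸ hdecided ∅ (by simp) with hacc | hrej
  · refine ⟨N₁, hN₁M, hN₁, Or.inl fun X hX hXi => ?_⟩
    obtain ⟨r, hr, hrA⟩ := hacc X hX hXi
    exact ⟨r, by rwa [Finset.empty_union] at hrA, hr⟩
  -- `∅` rejects `N₁`. A second fusion makes rejection pass from `s` to `insert n s` along `N₂`;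
  -- a member of `A` inside `N₂` would then be a rejecting set that accepts everything.
  obtain ⟨N₂, hN₂N₁, hN₂, hfew⟩ := exists_subset_forall_tailAbove
    (Φ := fun s K => Rejects A s (tailAbove N₁ s) →
      ∀ n ∈ K, n ∈ tailAbove N₁ s → ¬Accepts A (insert n s) (tailAbove N₁ (insert n s)))
    (fun _ _ _ h hΦ hrej n hn => hΦ hrej n (h hn))
    (fun s K hK => by
      by_cases hrej : Rejects A s (tailAbove N₁ s)
      · exact ⟨_, sdiff_subset, hK.sdiff hrej.finite_accepts_insert,
          fun _ n hn hns hacc => hn.2 ⟨hns, hacc⟩⟩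
      · exact ⟨K, subset_rfl, hK, fun h => absurd h hrej⟩) hN₁
  have hrej_all : ∀ s : Finset ℕ, ↑s ⊆ N₂ → Rejects A s (tailAbove N₁ s) := by
    intro s
    induction s using Finset.induction_on_max with
    | empty => exact fun _ => by rwa [tailAbove_empty]
    | insert a s hlt ih =>
      intro hs
      rw [Finset.coe_insert, insert_subset_iff] at hs
      refine (hdecided (insert a s) ?_).resolve_left
        (hfew s hs.2 (ih hs.2) a ⟨hs.1, hlt⟩ ⟨hN₂N₁ hs.1, hlt⟩)
      rw [Finset.coe_insert]
      exact insert_subset (hN₂N₁ hs.1) (hs.2.trans hN₂N₁)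
  exact ⟨N₂, hN₂N₁.trans hN₁M, hN₂, Or.inr fun s hs hsA =>
    hrej_all s hs _ subset_rfl (hN₁.tailAbove s) (accepts_of_mem hsA _)⟩

end NashWilliams

section Barriers

def barrierBase (B : Set (Finset ℕ)) : Set ℕ := ⋃ b ∈ B, (↑b : Set ℕ)

theorem subset_barrierBase {B : Set (Finset ℕ)} {b : Finset ℕ} (hb : b ∈ B) :
    ↑b ⊆ barrierBase B :=
  subset_biUnion_of_mem (u := fun b : Finset ℕ => (↑b : Set ℕ)) hb

theorem isBarrier_of_forall_natInitSeg {B : Set (Finset ℕ)} {M : Set ℕ} (hM : M.Infinite)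
    (hempty : ∅ ∉ B) (hanti : ∀ x ∈ B, ∀ y ∈ B, x ⊆ y → x = y) (hbase : barrierBase B ⊆ M)
    (hseg : ∀ X ⊆ M, X.Infinite → ∃ r ∈ B, NatInitSeg r X) : IsBarrier B := by
  refine ⟨fun hfin => ?_, hanti, fun X hX => hseg X (hX.trans hbase)⟩
  have hfin_base : (barrierBase B).Finite := hfin.biUnion fun b _ => b.finite_toSet
  obtain ⟨r, hr, hrX⟩ := hseg _ sdiff_subset (hM.sdiff hfin_base)
  obtain ⟨x, hx⟩ := Finset.nonempty_iff_ne_empty.2 (ne_of_mem_of_not_mem hr hempty)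
  exact (hrX.1 hx).2 (subset_barrierBase hr hx)

namespace IsBarrier

variable {B : Set (Finset ℕ)}

theorem empty_notMem (hB : IsBarrier B) : ∅ ∉ B := fun h =>
  hB.1 ((finite_singleton ∅).subset fun b hb =>
    (hB.2.1 ∅ h b hb (Finset.empty_subset b)).symm)

theorem barrierBase_infinite (hB : IsBarrier B) : (barrierBase B).Infinite := fun hfin =>
  hB.1 ((hfin.finite_subsets.preimage Finset.coe_injective.injOn).subset
    fun _ hb => subset_barrierBase hb)

theorem eq_of_natInitSeg (hB : IsBarrier B) {r s : Finset ℕ} {X : Set ℕ} (hr : r ∈ B)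
    (hs : s ∈ B) (hrX : NatInitSeg r X) (hsX : NatInitSeg s X) : r = s :=
  (hrX.subset_or_subset hsX).elim (hB.2.1 r hr s hs) fun h => (hB.2.1 s hs r hr h).symm

theorem restrict (hB : IsBarrier B) {M : Set ℕ} (hM : M ⊆ barrierBase B) (hMi : M.Infinite) :
    IsBarrier {b ∈ B | ↑b ⊆ M} := by
  refine isBarrier_of_forall_natInitSeg hMi (fun h => hB.empty_notMem h.1)
    (fun x hx y hy => hB.2.1 x hx.1 y hy.1) ?_ fun X hX hXi => ?_
  · simp only [barrierBase, iUnion_subset_iff]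
    exact fun b hb => hb.2
  · obtain ⟨r, hr, hrX⟩ := hB.2.2 X (hX.trans hM) hXi
    exact ⟨r, ⟨hr, hrX.1.trans hX⟩, hrX⟩

/-- The Nash-Williams partition theorem. -/
theorem exists_subbarrier_subset_or_disjoint (hB : IsBarrier B) (C : Set (Finset ℕ)) :
    ∃ B' ⊆ B, IsBarrier B' ∧ (B' ⊆ C ∨ Disjoint B' C) := by
  obtain ⟨M, hMB, hM, hC | hC⟩ :=
    exists_subset_forall_natInitSeg_mem_or_forall_not_mem (B ∩ C) hB.barrierBase_infinite
  · refine ⟨_, sep_subset _ _, hB.restrict hMB hM, Or.inl fun b ⟨hb, hbM⟩ => ?_⟩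
    obtain ⟨r, ⟨hrB, hrC⟩, hr⟩ := hC (↑b ∪ tailAbove M b)
      (union_subset hbM (tailAbove_subset M b)) ((hM.tailAbove b).mono subset_union_right)
    rwa [hB.eq_of_natInitSeg hrB hb hr (natInitSeg_union_tailAbove M b)] at hrC
  · exact ⟨_, sep_subset _ _, hB.restrict hMB hM,
      Or.inr (disjoint_left.2 fun b ⟨hb, hbM⟩ hbC => hC b hbM ⟨hb, hbC⟩)⟩

end IsBarrier

end Barriers

section Square

theorem Finset.union_eq_insert_of_erase_subset {α : Type*} [DecidableEq α] {s t : Finset α}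
    {m : α} (hm : m ∈ s) (h : s.erase m ⊆ t) : s ∪ t = insert m t := by
  rw [← Finset.insert_erase hm, Finset.insert_union, Finset.union_eq_right.2 h]

theorem ShiftExt.union_eq_insert {s t : Finset ℕ} (h : ShiftExt s t) :
    ∃ m ∈ s, (∀ x ∈ s, m ≤ x) ∧ (∀ y ∈ t, m < y) ∧ s ∪ t = insert m t := by
  obtain ⟨m, hm, hle, hlt, hsub, -⟩ := h
  exact ⟨m, hm, hle, hlt, Finset.union_eq_insert_of_erase_subset hm hsub⟩

theorem ShiftExt.natInitSeg_union {s t : Finset ℕ} (h : ShiftExt s t) :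
    NatInitSeg s ↑(s ∪ t) := by
  obtain ⟨m, hm, -, hlt, -, -, hord⟩ := h
  refine ⟨by simp, fun x hx hxs y hy => ?_⟩
  have hxt : x ∈ t := (Finset.mem_union.1 hx).resolve_left hxs
  obtain rfl | hym := eq_or_ne y m
  · exact hlt x hxt
  · exact hord x hxt (fun h => hxs (Finset.mem_of_mem_erase h)) y (Finset.mem_erase.2 ⟨hym, hy⟩)

def barrierSquare (B : Set (Finset ℕ)) : Set (Finset ℕ) :=
  {u | ∃ s ∈ B, ∃ t ∈ B, ShiftExt s t ∧ s ∪ t = u}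

theorem barrierBase_barrierSquare_subset (B : Set (Finset ℕ)) :
    barrierBase (barrierSquare B) ⊆ barrierBase B := by
  simp only [barrierBase, iUnion_subset_iff]
  rintro _ ⟨s, hs, t, ht, -, rfl⟩
  rw [Finset.coe_union]
  exact union_subset (subset_barrierBase hs) (subset_barrierBase ht)

namespace IsBarrier

variable {B : Set (Finset ℕ)}

theorem eq_of_union_eq (hB : IsBarrier B) {s t s' t' : Finset ℕ} (hs : s ∈ B) (hs' : s' ∈ B)
    (hst : ShiftExt s t) (hst' : ShiftExt s' t') (h : s ∪ t = s' ∪ t') : s = s' ∧ t = t' := by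
  obtain rfl : s = s' :=
    hB.eq_of_natInitSeg hs hs' hst.natInitSeg_union (h ▸ hst'.natInitSeg_union)
  obtain ⟨m, hm, hle, hlt, hu⟩ := hst.union_eq_insert
  obtain ⟨m', hm', hle', hlt', hu'⟩ := hst'.union_eq_insert
  obtain rfl : m = m' := le_antisymm (hle m' hm') (hle' m hm)
  have herase := congrArg (Finset.erase · m) (hu.symm.trans (h.trans hu'))
  simp only [Finset.erase_insert (fun h => (hlt m h).false),
    Finset.erase_insert (fun h => (hlt' m h).false)] at herase
  exact ⟨rfl, herase⟩

/-- Removing the minimum of `s ∪ t` leaves `t`, so `t` and `s'` are both initial segments of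
`s' ∪ t'` lying in `B`. -/
theorem eq_of_shiftExt_union (hB : IsBarrier B) {s t s' t' : Finset ℕ} (ht : t ∈ B)
    (hs' : s' ∈ B) (hst : ShiftExt s t) (hst' : ShiftExt s' t')
    (h : ShiftExt (s ∪ t) (s' ∪ t')) : t = s' := by
  obtain ⟨m, -, -, hlt, hu⟩ := hst.union_eq_insert
  rw [hu] at h
  obtain ⟨m', hm', hle', -, hsub, -, hord⟩ := h
  obtain rfl : m' = m := (Finset.mem_insert.1 hm').resolve_right fun h =>
    (hle' m (Finset.mem_insert_self m t)).not_gt (hlt m' h)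
  rw [Finset.erase_insert (fun h => (hlt m' h).false)] at hsub hord
  exact hB.eq_of_natInitSeg ht hs' ⟨by exact_mod_cast hsub, fun x hx => hord x hx⟩
    hst'.natInitSeg_union

theorem square_antichain (hB : IsBarrier B) :
    ∀ u ∈ barrierSquare B, ∀ v ∈ barrierSquare B, u ⊆ v → u = v := by
  rintro _ ⟨s, -, t, ht, hst, rfl⟩ _ ⟨s', -, t', ht', hst', rfl⟩ huv
  obtain ⟨m, -, -, hlt, hu⟩ := hst.union_eq_insert
  obtain ⟨m', -, -, hlt', hu'⟩ := hst'.union_eq_insert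
  rw [hu, hu'] at huv ⊢
  have hm'm : m' ≤ m := by
    rcases Finset.mem_insert.1 (huv (Finset.mem_insert_self m t)) with h | h
    exacts [h.ge, (hlt' m h).le]
  obtain rfl : t = t' := hB.2.1 t ht t' ht' fun x hx =>
    (Finset.mem_insert.1 (huv (Finset.mem_insert_of_mem hx))).resolve_left
      (hm'm.trans_lt (hlt x hx)).ne'
  obtain rfl : m = m' := (Finset.mem_insert.1 (huv (Finset.mem_insert_self m t))).resolve_right
    fun h => (hlt m h).false
  rfl

/-- The witness is `s ∪ t`, where `s ∈ B` is an initial segment of `X` and `t ∈ B` one of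
`X \ {min X}`. -/
theorem exists_barrierSquare_natInitSeg (hB : IsBarrier B) {X : Set ℕ}
    (hX : X ⊆ barrierBase B) (hXi : X.Infinite) : ∃ u ∈ barrierSquare B, NatInitSeg u X := by
  set m := sInf X
  obtain ⟨s, hs, hsX⟩ := hB.2.2 X hX hXi
  obtain ⟨t, ht, htX⟩ := hB.2.2 (X \ {m}) (sdiff_subset.trans hX) (hXi.sdiff (finite_singleton m))
  have hms : m ∈ s := by
    obtain ⟨y, hy⟩ := Finset.nonempty_iff_ne_empty.2 (ne_of_mem_of_not_mem hs hB.empty_notMem)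
    by_contra hms
    exact (hsX.2 m (Nat.sInf_mem hXi.nonempty) hms y hy).not_ge (Nat.sInf_le (hsX.1 hy))
  have hmt : m ∉ t := fun h => (htX.1 h).2 rfl
  have hts : ¬t ⊆ s := fun h => hmt (hB.2.1 t ht s hs h ▸ hms)
  have hsub : s.erase m ⊆ t := ((hsX.erase m).subset_or_subset htX).resolve_right
    fun h => hts (h.trans (Finset.erase_subset m s))
  refine ⟨s ∪ t, ⟨s, hs, t, ht, ⟨m, hms, fun x hx => Nat.sInf_le (hsX.1 hx),
    fun y hy => (Nat.sInf_le (htX.1 hy).1).lt_of_ne' (htX.1 hy).2, hsub,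
    fun h => hts (h ▸ Finset.erase_subset m s),
    fun x hx hxe y hy => (hsX.erase m).2 x (htX.1 hx) hxe y hy⟩, rfl⟩, ?_⟩
  rw [Finset.union_eq_insert_of_erase_subset hms hsub]
  exact htX.insert_sInf hXi.nonempty

theorem square (hB : IsBarrier B) : IsBarrier (barrierSquare B) :=
  isBarrier_of_forall_natInitSeg hB.barrierBase_infinite
    (fun ⟨_, _, t, _, ⟨m, hm, _⟩, h⟩ => Finset.notMem_empty m (h ▸ Finset.mem_union_left t hm))
    hB.square_antichain (barrierBase_barrierSquare_subset B)
    fun _ hX hXi => hB.exists_barrierSquare_natInitSeg hX hXi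

theorem exists_shiftExt (hB : IsBarrier B) : ∃ s ∈ B, ∃ t ∈ B, ShiftExt s t := by
  obtain ⟨_, s, hs, t, ht, hst, -⟩ := hB.square.1.nonempty
  exact ⟨s, hs, t, ht, hst⟩

end IsBarrier

end Square

section Bqo

variable {A C : Type*} {ra : A → A → Prop} {rc : C → C → Prop}

theorem IsBqoRel.of_map (hc : IsBqoRel rc) (φ : A → C) (h : ∀ x y, rc (φ x) (φ y) → ra x y) :
    IsBqoRel ra := fun B hB f =>
  let ⟨s, hs, t, ht, hst, hle⟩ := hc B hB (φ ∘ f)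
  ⟨s, hs, t, ht, hst, h _ _ hle⟩

theorem isBqoRel_of_forall (h : ∀ x y, ra x y) : IsBqoRel ra := fun _ hB _ =>
  let ⟨s, hs, t, ht, hst⟩ := hB.exists_shiftExt
  ⟨s, hs, t, ht, hst, h _ _⟩

theorem IsBqoRel.exists_shiftExt_of_subset_barrierSquare (hr : IsBqoRel ra)
    {B B' : Set (Finset ℕ)} (hB : IsBarrier B) (hB' : IsBarrier B')
    (hB'B : B' ⊆ barrierSquare B) (g : Finset ℕ → A) :
    ∃ s ∈ B, ∃ t ∈ B, ShiftExt s t ∧ s ∪ t ∈ B' ∧ ra (g s) (g t) := by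
  choose! fst hfst snd hsnd hshift hunion using fun u (hu : u ∈ B') => hB'B hu
  obtain ⟨u, hu, w, hw, huw, hle⟩ := hr B' hB' (g ∘ fst)
  have hsnd_fst : snd u = fst w := hB.eq_of_shiftExt_union (hsnd u hu) (hfst w hw)
    (hshift u hu) (hshift w hw) (by rwa [hunion u hu, hunion w hw])
  refine ⟨fst u, hfst u hu, snd u, hsnd u hu, hshift u hu, (hunion u hu).symm ▸ hu, ?_⟩
  rwa [hsnd_fst]

theorem IsBqoRel.prod (ha : IsBqoRel ra) (hc : IsBqoRel rc) :
    IsBqoRel (fun p q : A × C => ra p.1 q.1 ∧ rc p.2 q.2) := by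
  intro B hB f
  obtain ⟨B', hB'B, hB', hcolour | hcolour⟩ := hB.square.exists_subbarrier_subset_or_disjoint
    {u | ∃ s ∈ B, ∃ t ∈ B, ShiftExt s t ∧ s ∪ t = u ∧ ra (f s).1 (f t).1}
  · obtain ⟨s, hs, t, -, hst, hu, hle₂⟩ :=
      hc.exists_shiftExt_of_subset_barrierSquare hB hB' hB'B (fun x => (f x).2)
    obtain ⟨s', hs', t', ht', hst', heq, hle₁⟩ := hcolour hu
    obtain ⟨rfl, rfl⟩ := hB.eq_of_union_eq hs' hs hst' hst heq
    exact ⟨s', hs', t', ht', hst', hle₁, hle₂⟩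
  · obtain ⟨s, hs, t, ht, hst, hu, hle₁⟩ :=
      ha.exists_shiftExt_of_subset_barrierSquare hB hB' hB'B (fun x => (f x).1)
    exact absurd ⟨s, hs, t, ht, hst, rfl, hle₁⟩ (disjoint_left.1 hcolour hu)

theorem IsBqoRel.pi : ∀ {n : ℕ} {P : Fin n → Type*} {r : ∀ i, P i → P i → Prop},
    (∀ i, IsBqoRel (r i)) → IsBqoRel (fun f g : ∀ i, P i => ∀ i, r i (f i) (g i))
  | 0, _, _, _ => isBqoRel_of_forall fun _ _ i => i.elim0
  | _ + 1, _, _, h => ((h 0).prod (IsBqoRel.pi fun i => h i.succ)).of_map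
      (fun f => (f 0, Fin.tail f)) fun _ _ hfg => Fin.cases hfg.1 hfg.2

end Bqo

section SigmaBqo

variable {A C : Type*} {ra : A → A → Prop} {rc : C → C → Prop}

theorem IsSigmaBqoRel.of_iUnion_eq_univ {ι : Type*} [Countable ι] [Nonempty ι]
    (hw : IsWqoRel ra) (S : ι → Set A) (hS : ⋃ i, S i = univ)
    (hb : ∀ i, IsBqoRel (fun x y : S i => ra x.1 y.1)) : IsSigmaBqoRel ra := by
  obtain ⟨e, he⟩ := exists_surjective_nat ι
  exact ⟨hw, S ∘ e, by rwa [← he.iUnion_comp] at hS, fun n => hb (e n)⟩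

theorem IsSigmaBqoRel.prod [IsPreorder A ra] (ha : IsSigmaBqoRel ra) (hc : IsSigmaBqoRel rc) :
    IsSigmaBqoRel (fun p q : A × C => ra p.1 q.1 ∧ rc p.2 q.2) := by
  obtain ⟨haw, S, hS, hSb⟩ := ha
  obtain ⟨hcw, T, hT, hTb⟩ := hc
  refine .of_iUnion_eq_univ (WellQuasiOrdered.prod haw hcw) (fun k : ℕ × ℕ => S k.1 ×ˢ T k.2)
    (by rw [iUnion_prod, hS, hT, univ_prod_univ]) fun k => ((hSb k.1).prod (hTb k.2)).of_map
      (fun x => (⟨x.1.1, x.2.1⟩, ⟨x.1.2, x.2.2⟩)) fun _ _ => id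

theorem IsSigmaBqoRel.pi {n : ℕ} {P : Fin n → Type*} {r : ∀ i, P i → P i → Prop}
    [∀ i, IsPreorder (P i) (r i)] (h : ∀ i, IsSigmaBqoRel (r i)) :
    IsSigmaBqoRel (fun f g : ∀ i, P i => ∀ i, r i (f i) (g i)) := by
  choose S hS hSb using fun i => (h i).2
  refine .of_iUnion_eq_univ (WellQuasiOrdered.pi fun i => (h i).1)
    (fun k : Fin n → ℕ => univ.pi fun i => S i (k i))
    (by simp only [iUnion_univ_pi, hS, pi_univ]) fun k => (IsBqoRel.pi fun i => hSb i (k i)).of_map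
      (fun x i => ⟨x.1 i, x.2 i (mem_univ i)⟩) fun _ _ => id

end SigmaBqo

/-- A product of two `σ`-bqo posets, and more generally any finite product of `σ`-bqo posets,
with the coordinatewise order, is `σ`-bqo. -/
theorem stmt_6 :
    (∀ (P : Type u) (Q : Type v) [PartialOrder P] [PartialOrder Q],
      IsSigmaBqoRel ((· ≤ ·) : P → P → Prop) → IsSigmaBqoRel ((· ≤ ·) : Q → Q → Prop) →
      IsSigmaBqoRel (fun a b : P × Q => a.1 ≤ b.1 ∧ a.2 ≤ b.2)) ∧
    (∀ (n : ℕ) (P : Fin n → Type u) [∀ i, PartialOrder (P i)],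
      (∀ i, IsSigmaBqoRel ((· ≤ ·) : P i → P i → Prop)) →
      IsSigmaBqoRel (fun f g : ∀ i, P i => ∀ i, f i ≤ g i)) :=
  ⟨fun _ _ _ _ hP hQ => hP.prod hQ, fun _ _ _ hP => IsSigmaBqoRel.pi hP⟩
end

section
/- Let (I, ≤_I) be a poset and for each i ∈ I let (P_i, ≤_i) be a poset with least element 0_i. Then the Dress–Schiffels relation ≤_DS is a partial order on the set of finitely supported functions ∏^{fin}_{i∈I} P_i: it is reflexive, antisymmetric, and transitive. -/
universe u v

open Set

/-- The Dress–Schiffels relation is a partial order on the set of finitely supported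
functions: reflexive, antisymmetric and transitive. -/
theorem stmt_8 {I : Type u} [PartialOrder I] {P : I → Type v} [∀ i, PartialOrder (P i)]
    [∀ i, OrderBot (P i)] :
    (∀ f : DSProd I P, DSle f.1 f.1) ∧
    (∀ f g : DSProd I P, DSle f.1 g.1 → DSle g.1 f.1 → f = g) ∧
    (∀ f g h : DSProd I P, DSle f.1 g.1 → DSle g.1 h.1 → DSle f.1 h.1) := by
  have hΔfin : ∀ f g : DSProd I P, {i | f.1 i ≠ g.1 i}.Finite := by
    intro f g
    refine (f.2.union g.2).subset fun i hi => ?_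
    by_contra h
    simp only [Set.mem_union, Set.mem_setOf_eq, not_or, not_not] at h
    exact hi (h.1.trans h.2.symm)
  refine ⟨fun f i hi => absurd rfl hi.1, ?_, ?_⟩
  · -- antisymmetry
    intro f g hfg hgf
    by_contra hne
    have hne' : f.1 ≠ g.1 := fun h => hne (Subtype.ext h)
    obtain ⟨i, hi⟩ : ∃ i, f.1 i ≠ g.1 i := by
      by_contra h
      push_neg at h
      exact hne' (funext h)
    obtain ⟨j, _, hj⟩ := (hΔfin f g).exists_le_maximal hi
    have h1 := hfg j hj
    have h2 := hgf j ⟨fun h => hj.1 h.symm, fun x hx => hj.2 fun h => hx h.symm⟩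
    exact absurd (h1.trans h2) (lt_irrefl _)
  · -- transitivity
    intro f g h hfg hgh i hi
    -- S = Δ(f,g) ∪ Δ(g,h) is finite, pick j ≥ i maximal in S
    have hS : ({k | f.1 k ≠ g.1 k} ∪ {k | g.1 k ≠ h.1 k}).Finite :=
      (hΔfin f g).union (hΔfin g h)
    have hiS : i ∈ {k | f.1 k ≠ g.1 k} ∪ {k | g.1 k ≠ h.1 k} := by
      by_contra hc
      simp only [Set.mem_union, Set.mem_setOf_eq, not_or, not_not] at hc
      exact hi.1 (hc.1.trans hc.2)
    obtain ⟨j, hij, hj⟩ := hS.exists_le_maximal hiS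
    -- j is maximal in each of the two sets it belongs to
    have hmax1 : f.1 j ≠ g.1 j → Maximal (fun k => f.1 k ≠ g.1 k) j :=
      fun hne => ⟨hne, fun x hx hjx => hj.2 (Or.inl hx) hjx⟩
    have hmax2 : g.1 j ≠ h.1 j → Maximal (fun k => g.1 k ≠ h.1 k) j :=
      fun hne => ⟨hne, fun x hx hjx => hj.2 (Or.inr hx) hjx⟩
    have hfh : f.1 j < h.1 j := by
      rcases hj.1 with hne | hne
      · have h1 := hfg j (hmax1 hne)
        rcases eq_or_ne (g.1 j) (h.1 j) with he | hne2
        · exact he ▸ h1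
        · exact h1.trans (hgh j (hmax2 hne2))
      · have h2 := hgh j (hmax2 hne)
        rcases eq_or_ne (f.1 j) (g.1 j) with he | hne1
        · exact he ▸ h2
        · exact (hfg j (hmax1 hne1)).trans h2
    have hjΔ : f.1 j ≠ h.1 j := hfh.ne
    have : i = j := le_antisymm hij (hi.2 hjΔ hij)
    rw [this]
    exact hfh
end

section
/- If the index poset I is wqo and each poset P_i (i ∈ I, each with least element 0_i) is wqo, then the Dress–Schiffels product ⊗^{DS}_{i∈I} P_i is wqo. -/
/-!
Nash-Williams' minimal bad sequence argument. Take a bad sequence `f` that is minimal for the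
size of the supports, and let `i n` be a maximal point of the support of `f n`. Erasing `f n` at
`i n` gives terms `DSle`-below `f n` with smaller support, so by minimality every subsequence of
the erased sequence is good. Pass to a subsequence along which `(i n, f n (i n))` increases in the
lexicographic sum `Σₗ i, P i`, which is wqo. A good pair of erased terms `m < n` then lifts to
`f m ≤DS f n`: if `i m = i n` the comparison at `i n` is restored, and if `i m < i n` then
maximality of `i m` forces `f m (i n) = ⊥ < f n (i n)`, with `i n` dominating `i m`.
-/

universe u v

open Set

open Function

namespace Sigma.Lex

variable {ι : Type*} {α : ι → Type*} [PartialOrder ι] [∀ i, Preorder (α i)]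

instance wellQuasiOrderedLE [WellQuasiOrderedLE ι] [∀ i, WellQuasiOrderedLE (α i)] :
    WellQuasiOrderedLE (Σₗ i, α i) := by
  refine ⟨fun x => ?_⟩
  obtain ⟨φ, hφ⟩ := wellQuasiOrdered_le.exists_monotone_subseq fun n => (ofLex (x n)).1
  set j := (ofLex (x (φ 0))).1
  by_cases hlt : ∃ n, j < (ofLex (x (φ n))).1
  · obtain ⟨n, hn⟩ := hlt
    have hn0 : 0 < n := Nat.pos_of_ne_zero (by rintro rfl; exact hn.false)
    exact ⟨φ 0, φ n, φ.strictMono hn0, Sigma.Lex.left _ _ hn⟩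
  · push Not at hlt
    have hx (n : ℕ) : ∃ a : α j, x (φ n) = toLex ⟨j, a⟩ := by
      have hj : (ofLex (x (φ n))).1 = j := (eq_of_le_of_not_lt (hφ 0 n n.zero_le) (hlt n)).symm
      rcases hxn : x (φ n) with ⟨k, a⟩
      rw [hxn] at hj
      subst hj
      exact ⟨a, rfl⟩
    choose a ha using hx
    obtain ⟨m, n, hmn, hle⟩ := wellQuasiOrdered_le a
    exact ⟨φ m, φ n, φ.strictMono hmn, by rw [ha, ha]; exact Sigma.Lex.right _ _ hle⟩

end Sigma.Lex

namespace Set.PartiallyWellOrderedOn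

variable {α : Type*} {r : α → α → Prop} {rk : α → ℕ} {s : Set α}

theorem exists_lt_of_isMinBadSeq [IsTrans α r] {f g : ℕ → α} (hf : IsBadSeq r s f)
    (hmin : ∀ n, IsMinBadSeq r rk s n f) (hgs : ∀ n, g n ∈ s) (hgf : ∀ n, r (g n) (f n))
    (hrk : ∀ n, rk (g n) < rk (f n)) (φ : ℕ ↪o ℕ) :
    ∃ k l, k < l ∧ r (g (φ k)) (g (φ l)) := by
  by_contra! hbad
  classical
  -- `f` up to `φ 0`, then `g ∘ φ`: bad, and below `f` in rank at `φ 0`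
  let G : ℕ → α := fun m => if m < φ 0 then f m else g (φ (m - φ 0))
  refine hmin (φ 0) G (fun m hm => (if_pos hm).symm) ?_ ⟨fun m => ?_, fun a b hab => ?_⟩
  · simpa [G] using hrk (φ 0)
  · by_cases hm : m < φ 0
    · simpa [G, hm] using hf.1 m
    · simpa [G, hm] using hgs _
  · by_cases hb : b < φ 0
    · simpa [G, hb, hab.trans hb] using hf.2 a b hab
    by_cases ha : a < φ 0
    · simp only [G, ha, hb, if_true, if_false]
      exact fun hr => hf.2 a _ (ha.trans_le (φ.monotone (Nat.zero_le _)))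
        (_root_.trans hr (hgf _))
    · simp only [G, ha, hb, if_false]
      exact hbad _ _ (by omega)

end Set.PartiallyWellOrderedOn

theorem setOf_update_bot_ne_subset {ι : Type*} {α : ι → Type*} [∀ i, Bot (α i)] [DecidableEq ι]
    (f : ∀ i, α i) (i : ι) : {j | update f i ⊥ j ≠ ⊥} ⊆ {j | f j ≠ ⊥} := fun j hj => by
  by_cases hji : j = i
  · subst hji
    simp at hj
  · simpa [update_of_ne hji] using hj

section DSle

variable {I : Type u} [PartialOrder I] {P : I → Type v} [∀ i, PartialOrder (P i)]

theorem bot_dsle [∀ i, OrderBot (P i)] (g : ∀ i, P i) : DSle ⊥ g :=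
  fun _ hi => bot_lt_iff_ne_bot.2 (Ne.symm hi.1)

theorem dsle_update_bot_self [∀ i, OrderBot (P i)] [DecidableEq I] {f : ∀ i, P i} {i : I}
    (hi : f i ≠ ⊥) : DSle (update f i ⊥) f := by
  intro k hk
  obtain rfl : k = i := by_contra fun hki => hk.1 (update_of_ne hki _ _)
  simpa using bot_lt_iff_ne_bot.2 hi

theorem DSle.le_of_maximal {f g : ∀ i, P i} (h : DSle f g) {s : Set I}
    (hs : {i | f i ≠ g i} ⊆ s) {j : I} (hj : Maximal (· ∈ s) j) : f j ≤ g j := by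
  by_cases hfg : f j = g j
  · exact hfg.le
  · exact (h j ⟨hfg, fun k hk hjk => hj.2 (hs hk) hjk⟩).le

theorem DSle.trans {f g h : ∀ i, P i} (hfg : {i | f i ≠ g i}.Finite)
    (hgh : {i | g i ≠ h i}.Finite) (h₁ : DSle f g) (h₂ : DSle g h) : DSle f h := by
  intro i hi
  have hsub : {i | f i ≠ h i} ⊆ {i | f i ≠ g i} ∪ {i | g i ≠ h i} := fun k hk =>
    (hk.ne_or_ne (g k)).imp id Ne.symm
  obtain ⟨j, hij, hj⟩ := (hfg.union hgh).exists_le_maximal (hsub hi.1)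
  have hfj := h₁.le_of_maximal subset_union_left hj
  have hgj := h₂.le_of_maximal subset_union_right hj
  have hlt : f j < h j := by
    rcases hj.1 with hne | hne
    · exact (lt_of_le_of_ne hfj hne).trans_le hgj
    · exact hfj.trans_lt (lt_of_le_of_ne hgj hne)
  obtain rfl : i = j := le_antisymm hij (hi.2 hlt.ne hij)
  exact hlt

/-- Maximality of `k` in `Δ(f,g)` only involves points above `k`, so it passes to `Δ(f',g')`. -/
theorem DSle.lt_of_maximal {f g f' g' : ∀ i, P i} (h : DSle f' g') {k : I}
    (hk : Maximal (fun x => f x ≠ g x) k) (hf : f' k = f k) (hg : g' k = g k)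
    (hup : ∀ x, k ≤ x → f' x ≠ g' x → f x ≠ g x) : f k < g k :=
  hf ▸ hg ▸ h k ⟨by simpa [hf, hg] using hk.1, fun x hx hkx => hk.2 (hup x hkx hx) hkx⟩

theorem DSle.of_update_update [DecidableEq I] {f g : ∀ i, P i} {i : I} {a : P i}
    (h : DSle (update f i a) (update g i a)) (hi : f i ≤ g i) : DSle f g := by
  intro k hk
  by_cases hki : k = i
  · subst hki
    exact lt_of_le_of_ne hi hk.1
  refine h.lt_of_maximal hk (update_of_ne hki _ _) (update_of_ne hki _ _) fun x _ hx => ?_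
  by_cases hxi : x = i
  · subst hxi
    simp at hx
  · simpa [update_of_ne hxi] using hx

theorem DSle.of_update_update_of_lt [DecidableEq I] {f g : ∀ i, P i} {i j : I} {a : P i}
    (h : DSle (update f i a) (update g j (f j))) (hij : i < j) (hj : f j < g j) :
    DSle f g := by
  intro k hk
  by_cases hkj : k ≤ j
  · obtain rfl : k = j := le_antisymm hkj (hk.2 hj.ne hkj)
    exact hj
  have hne (x : I) (hkx : k ≤ x) : x ≠ i ∧ x ≠ j := by
    constructor <;> rintro rfl
    exacts [hkj (hkx.trans hij.le), hkj hkx]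
  refine h.lt_of_maximal hk ?_ ?_ fun x hkx hx => ?_
  · simp [hne k le_rfl]
  · simp [hne k le_rfl]
  · simpa [hne x hkx] using hx

theorem DSle.of_update_bot [∀ i, OrderBot (P i)] [DecidableEq I] {f g : ∀ i, P i} {i j : I}
    (h : DSle (update f i ⊥) (update g j ⊥)) (hi : Maximal (fun x => f x ≠ ⊥) i)
    (hj : g j ≠ ⊥) (hij : toLex (⟨i, f i⟩ : Σ i, P i) ≤ toLex ⟨j, g j⟩) : DSle f g := by
  change Sigma.Lex _ _ ⟨i, f i⟩ ⟨j, g j⟩ at hij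
  rcases hij with ⟨_, _, hlt⟩ | ⟨_, _, hle⟩
  · have hfj : f j = ⊥ := by
      by_contra hfj
      exact hlt.not_ge (hi.2 hfj hlt.le)
    exact DSle.of_update_update_of_lt (hfj ▸ h) hlt (hfj ▸ bot_lt_iff_ne_bot.2 hj)
  · exact h.of_update_update hle

end DSle

namespace DSProd

variable {I : Type u} [PartialOrder I] {P : I → Type v} [∀ i, PartialOrder (P i)]
  [∀ i, OrderBot (P i)]

theorem finite_ne (f g : DSProd I P) : {i | f.1 i ≠ g.1 i}.Finite :=
  (f.2.union g.2).subset fun _ hi => hi.ne_or_ne ⊥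

instance : IsTrans (DSProd I P) (fun f g => DSle f.1 g.1) :=
  ⟨fun f g h => DSle.trans (finite_ne f g) (finite_ne g h)⟩

theorem exists_maximal_of_not_dsle {f g : DSProd I P} (h : ¬ DSle f.1 g.1) :
    ∃ i, Maximal (fun i => f.1 i ≠ ⊥) i := by
  refine f.2.exists_maximal (Set.nonempty_iff_ne_empty.2 fun hf => h ?_)
  convert bot_dsle g.1
  funext i
  simpa using Set.eq_empty_iff_forall_notMem.1 hf i

variable [DecidableEq I]

def erase (f : DSProd I P) (i : I) : DSProd I P :=
  ⟨update f.1 i ⊥, f.2.subset (setOf_update_bot_ne_subset f.1 i)⟩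

theorem ncard_erase_lt {f : DSProd I P} {i : I} (hi : f.1 i ≠ ⊥) :
    {j | (f.erase i).1 j ≠ ⊥}.ncard < {j | f.1 j ≠ ⊥}.ncard :=
  Set.ncard_lt_ncard ⟨setOf_update_bot_ne_subset f.1 i, fun h => by simpa [erase] using h hi⟩ f.2

end DSProd

/-- If `I` is wqo and every `P i` is wqo, then the Dress–Schiffels product is wqo. -/
theorem stmt_9 {I : Type u} [PartialOrder I] {P : I → Type v} [∀ i, PartialOrder (P i)]
    [∀ i, OrderBot (P i)]
    (hI : IsWqoRel ((· ≤ ·) : I → I → Prop))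
    (hP : ∀ i, IsWqoRel ((· ≤ ·) : P i → P i → Prop)) :
    IsWqoRel (fun f g : DSProd I P => DSle f.1 g.1) := by
  classical
  have : WellQuasiOrderedLE I := ⟨hI⟩
  have (i : I) : WellQuasiOrderedLE (P i) := ⟨hP i⟩
  intro p
  by_contra! hp
  obtain ⟨f, hf, hmin⟩ := PartiallyWellOrderedOn.exists_min_bad_of_exists_bad
    (fun f g : DSProd I P => DSle f.1 g.1)
    (fun x : DSProd I P => {i | x.1 i ≠ ⊥}.ncard) univ ⟨p, fun _ => trivial, hp⟩
  choose i hi using fun n => DSProd.exists_maximal_of_not_dsle (hf.2 n (n + 1) n.lt_succ_self)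
  obtain ⟨φ, hφ⟩ := wellQuasiOrdered_le.exists_monotone_subseq
    fun n => toLex (⟨i n, (f n).1 (i n)⟩ : Σ i, P i)
  obtain ⟨k, l, hkl, hr⟩ := PartiallyWellOrderedOn.exists_lt_of_isMinBadSeq hf hmin
    (g := fun n => (f n).erase (i n)) (fun _ => trivial)
    (fun n => dsle_update_bot_self (hi n).1) (fun n => DSProd.ncard_erase_lt (hi n).1) φ
  exact hf.2 _ _ (φ.strictMono hkl) (hr.of_update_bot (hi _) (hi _).1 (hφ k l hkl.le))
end

section
/- Let α be a countable ordinal with ω ≤ α. If the index poset I is α-wqo and each poset P_i (i ∈ I, each with least element 0_i) is α-wqo, then the Dress–Schiffels product ⊗^{DS}_{i∈I} P_i is α-wqo. -/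
universe u v

open Set

/-!
Let `F : B → ⊗ᴰˢ P` be bad. For each shift pair `s ◁ t` some `i` in the finite support of
`F s` is maximal in `Δ(F s, F t)` with `F s i ≮ F t i`. Nash-Williams' partition theorem, applied
to the links of `B` (whose ranks stay below `α`), lets us shrink the base of `B` so that this
witness `ι s` depends on `s` alone, and then so that all shift pairs compare `ι s` and `ι t` in
the same way. If always `ι s ≰ ι t`, then `ι` is bad for `I`. If always `ι s = ι t`, then `ι` is
constant because the shift graph of a barrier is connected, and `s ↦ F s (ι s)` is bad for that
`P i`. If always `ι s < ι t`, then along a shift chain `s₀ ◁ s₁ ◁ ⋯` every `ι sₖ` lies in the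
support of `F s₀`, which is finite.
-/

/-- `IsBarrier` with base inside `S`, except that `∅` is allowed: links of fronts can be `{∅}`. -/
structure FrontOn (C : Set (Finset ℕ)) (S : Set ℕ) : Prop where
  infinite : S.Infinite
  subset : ∀ b ∈ C, ↑b ⊆ S
  antichain : ∀ x ∈ C, ∀ y ∈ C, x ⊆ y → x = y
  exists_initSeg : ∀ X ⊆ S, X.Infinite → ∃ r ∈ C, NatInitSeg r X

def restrictTo (C : Set (Finset ℕ)) (X : Set ℕ) : Set (Finset ℕ) := {b ∈ C | ↑b ⊆ X}

lemma restrictTo_subset {C : Set (Finset ℕ)} {X : Set ℕ} : restrictTo C X ⊆ C := fun _ hb => hb.1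

lemma restrictTo_mono {C : Set (Finset ℕ)} {X Y : Set ℕ} (h : Y ⊆ X) :
    restrictTo C Y ⊆ restrictTo C X := fun _ hb => ⟨hb.1, hb.2.trans h⟩

lemma Set.Infinite.inter_Ioi {S : Set ℕ} (hS : S.Infinite) (M : ℕ) : (S ∩ Ioi M).Infinite := by
  rw [← sdiff_compl, compl_Ioi]
  exact hS.sdiff (finite_Iic M)

lemma natInitSeg_union {r : Finset ℕ} {Z : Set ℕ} (hZ : ∀ z ∈ Z, ∀ y ∈ r, y < z) :
    NatInitSeg r (↑r ∪ Z) := by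
  refine ⟨subset_union_left, fun x hx hxr y hy => ?_⟩
  rcases hx with hx | hx
  · exact absurd hx hxr
  · exact hZ x hx y hy

namespace NatInitSeg

variable {r r' : Finset ℕ} {X : Set ℕ}

lemma mem_of_le (h : NatInitSeg r X) {x y : ℕ} (hx : x ∈ X) (hy : y ∈ r) (hxy : x ≤ y) :
    x ∈ r := by
  by_contra hxr
  exact (h.2 x hx hxr y hy).not_ge hxy

lemma subset_or_subset_s10 (h : NatInitSeg r X) (h' : NatInitSeg r' X) : r ⊆ r' ∨ r' ⊆ r := by
  refine or_iff_not_imp_left.2 fun hc b hb => ?_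
  obtain ⟨a, har, har'⟩ := Finset.not_subset.1 hc
  by_contra hbr
  exact lt_asymm (h.2 b (h'.1 hb) hbr a har) (h'.2 a (h.1 har) har' b hb)

lemma erase_of_insert {a : ℕ} (ha : a ∉ X) (h : NatInitSeg r (insert a X)) :
    NatInitSeg (r.erase a) X := by
  refine ⟨fun x hx => ?_, fun x hx hxr y hy => ?_⟩
  · obtain ⟨hxa, hxr⟩ := Finset.mem_erase.1 hx
    exact (h.1 hxr).resolve_left hxa
  · have hxa : x ≠ a := fun h => ha (h ▸ hx)
    exact h.2 x (mem_insert_of_mem a hx) (fun h => hxr (Finset.mem_erase.2 ⟨hxa, h⟩)) y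
      (Finset.mem_of_mem_erase hy)

end NatInitSeg

namespace FrontOn

variable {C : Set (Finset ℕ)} {S : Set ℕ}

lemma initSeg_unique (hC : FrontOn C S) {r r' : Finset ℕ} {X : Set ℕ} (hr : r ∈ C)
    (hr' : r' ∈ C) (h : NatInitSeg r X) (h' : NatInitSeg r' X) : r = r' := by
  rcases h.subset_or_subset_s10 h' with hh | hh
  · exact hC.antichain r hr r' hr' hh
  · exact (hC.antichain r' hr' r hr hh).symm

lemma restrict (hC : FrontOn C S) {X : Set ℕ} (hXS : X ⊆ S) (hX : X.Infinite) :
    FrontOn (restrictTo C X) X where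
  infinite := hX
  subset _ hb := hb.2
  antichain x hx y hy := hC.antichain x hx.1 y hy.1
  exists_initSeg Y hYX hY := by
    obtain ⟨r, hr, hrY⟩ := hC.exists_initSeg Y (hYX.trans hXS) hY
    exact ⟨r, ⟨hr, hrY.1.trans hYX⟩, hrY⟩

lemma isBarrier (hC : FrontOn C S) (h0 : ∅ ∉ C) : IsBarrier C := by
  refine ⟨fun hfin => ?_, hC.antichain, fun X hX => hC.exists_initSeg X fun x hx => ?_⟩
  · have hbase : (S \ ⋃ b ∈ C, (↑b : Set ℕ)).Infinite :=
      hC.infinite.sdiff (hfin.biUnion fun b _ => b.finite_toSet)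
    obtain ⟨r, hr, hrX⟩ := hC.exists_initSeg _ sdiff_subset hbase
    obtain ⟨a, ha⟩ := Finset.nonempty_of_ne_empty (hr.ne_of_notMem h0)
    exact (hrX.1 ha).2 (mem_biUnion hr ha)
  · obtain ⟨b, hb, hxb⟩ := mem_iUnion₂.1 (hX hx)
    exact hC.subset b hb hxb

end FrontOn

lemma IsBarrier.empty_notMem_s10 {B : Set (Finset ℕ)} (hB : IsBarrier B) : ∅ ∉ B := fun h =>
  hB.1 <| (finite_singleton ∅).subset fun y hy => (hB.2.1 ∅ h y hy y.empty_subset).symm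

lemma IsBarrier.frontOn {B : Set (Finset ℕ)} (hB : IsBarrier B) :
    FrontOn B (⋃ b ∈ B, (↑b : Set ℕ)) where
  infinite hfin := hB.1 <| (hfin.finite_subsets.preimage Finset.coe_injective.injOn).subset
    fun _ hb => subset_biUnion_of_mem (u := fun b : Finset ℕ => (↑b : Set ℕ)) hb
  subset _ hb := subset_biUnion_of_mem (u := fun b : Finset ℕ => (↑b : Set ℕ)) hb
  antichain := hB.2.1
  exists_initSeg := hB.2.2

lemma BarrierTypeLE.mono {C C' : Set (Finset ℕ)} {α : Ordinal.{0}} (h : BarrierTypeLE C α)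
    (hC' : C' ⊆ C) : BarrierTypeLE C' α := by
  obtain ⟨g, hgα, hg⟩ := h
  exact ⟨g, fun b hb => hgα b (hC' hb), fun b₁ h₁ b₂ h₂ => hg b₁ (hC' h₁) b₂ (hC' h₂)⟩
def ForallShiftExt (C : Set (Finset ℕ)) (Q : Finset ℕ → Finset ℕ → Prop) : Prop :=
  ∀ s ∈ C, ∀ t ∈ C, ShiftExt s t → Q s t

lemma ForallShiftExt.mono {C C' : Set (Finset ℕ)} {Q : Finset ℕ → Finset ℕ → Prop}
    (h : ForallShiftExt C Q) (hC' : C' ⊆ C) : ForallShiftExt C' Q :=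
  fun s hs t ht => h s (hC' hs) t (hC' ht)

namespace ShiftExt

variable {s t : Finset ℕ}

lemma nonempty (h : ShiftExt s t) : s.Nonempty :=
  let ⟨m, hm, _⟩ := h; ⟨m, hm⟩

lemma lt_of_mem_sdiff (h : ShiftExt s t) : ∀ x ∈ t \ s, ∀ y ∈ s, y < x := by
  obtain ⟨m, -, -, hmt, -, -, hseg⟩ := h
  intro x hx y hy
  obtain ⟨hxt, hxs⟩ := Finset.mem_sdiff.1 hx
  rcases eq_or_ne y m with rfl | hym
  · exact hmt x hxt
  · exact hseg x hxt (fun h => hxs (Finset.mem_of_mem_erase h)) y (Finset.mem_erase.2 ⟨hym, hy⟩)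

lemma erase_min'_union_sdiff (h : ShiftExt s t) :
    s.erase (s.min' h.nonempty) ∪ (t \ s) = t := by
  obtain ⟨m, hm, hmin, hmt, hsub, -, -⟩ := h
  rw [show s.min' _ = m from le_antisymm (s.min'_le m hm) (hmin _ (s.min'_mem _))]
  refine subset_antisymm (Finset.union_subset hsub Finset.sdiff_subset) fun x hxt => ?_
  by_cases hxs : x ∈ s
  · exact Finset.mem_union_left _ (Finset.mem_erase.2 ⟨(hmt x hxt).ne', hxs⟩)
  · exact Finset.mem_union_right _ (Finset.mem_sdiff.2 ⟨hxt, hxs⟩)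

end ShiftExt

lemma shiftExt_erase_min'_union {s d : Finset ℕ} (hs : s.Nonempty) (hd : d.Nonempty)
    (hds : ∀ x ∈ d, ∀ y ∈ s, y < x) : ShiftExt s (s.erase (s.min' hs) ∪ d) := by
  refine ⟨s.min' hs, s.min'_mem hs, s.min'_le, fun y hy => ?_, Finset.subset_union_left, ?_, ?_⟩
  · rcases Finset.mem_union.1 hy with hy | hy
    · exact s.min'_lt_of_mem_erase_min' hs hy
    · exact hds y hy _ (s.min'_mem hs)
  · intro h
    obtain ⟨x, hx⟩ := hd
    have hxs : x ∈ s.erase _ := h ▸ Finset.mem_union_right _ hx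
    exact (hds x hx x (Finset.mem_of_mem_erase hxs)).false
  · intro x hx hxr y hy
    rcases Finset.mem_union.1 hx with hx | hx
    · exact absurd hx hxr
    · exact hds x hx y (Finset.mem_of_mem_erase hy)

namespace FrontOn

variable {C : Set (Finset ℕ)} {S : Set ℕ}

lemma shiftExt_of_initSeg_insert (hC : FrontOn C S) (h0 : ∅ ∉ C) {a : ℕ} {Y : Set ℕ}
    (ha : ∀ y ∈ Y, a < y) {w w' : Finset ℕ} (hw : w ∈ C) (hwY : NatInitSeg w (insert a Y))
    (hw' : w' ∈ C) (hw'Y : NatInitSeg w' Y) : ShiftExt w w' := by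
  have haY : a ∉ Y := fun h => lt_irrefl a (ha a h)
  have hge : ∀ x ∈ w, a ≤ x := fun x hx => (hwY.1 hx).elim ge_of_eq fun h => (ha x h).le
  obtain ⟨y, hy⟩ := Finset.nonempty_of_ne_empty (hw.ne_of_notMem h0)
  have haw : a ∈ w := hwY.mem_of_le (mem_insert a Y) hy (hge y hy)
  have hseg := hwY.erase_of_insert haY
  have hnot : ¬ w' ⊆ w.erase a := fun h => by
    obtain rfl := hC.antichain w' hw' w hw (h.trans (Finset.erase_subset a w))
    exact haY (hw'Y.1 haw)
  refine ⟨a, haw, hge, fun y hy => ha y (hw'Y.1 hy), ?_, fun h => hnot (h ▸ subset_rfl),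
    fun x hx hxw y hy => hseg.2 x (hw'Y.1 hx) hxw y hy⟩
  exact (hseg.subset_or_subset_s10 hw'Y).resolve_right hnot

lemma exists_shiftExt (hC : FrontOn C S) (h0 : ∅ ∉ C) {s : Finset ℕ} (hs : s ∈ C) :
    ∃ t ∈ C, ShiftExt s t := by
  have hsne : s.Nonempty := Finset.nonempty_of_ne_empty (hs.ne_of_notMem h0)
  set m := s.min' hsne
  set Z := S ∩ Ioi (s.max' hsne)
  have hZ : ∀ z ∈ Z, ∀ y ∈ s, y < z := fun z hz y hy => (s.le_max' y hy).trans_lt hz.2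
  set Y := ↑(s.erase m) ∪ Z
  have hYS : Y ⊆ S := union_subset ((Finset.coe_subset.2 (s.erase_subset m)).trans
    (hC.subset s hs)) inter_subset_left
  have hmY : ∀ y ∈ Y, m < y := by
    rintro y (hy | hy)
    · exact s.min'_lt_of_mem_erase_min' hsne hy
    · exact hZ y hy m (s.min'_mem hsne)
  have hsY : NatInitSeg s (insert m Y) := by
    change NatInitSeg s (insert m (↑(s.erase m) ∪ Z))
    rw [← insert_union, ← Finset.coe_insert, Finset.insert_erase (s.min'_mem hsne)]
    exact natInitSeg_union hZ
  obtain ⟨t, ht, htY⟩ := hC.exists_initSeg Y hYS ((hC.infinite.inter_Ioi _).mono subset_union_right)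
  exact ⟨t, ht, hC.shiftExt_of_initSeg_insert h0 hmY hs hsY ht htY⟩

lemma exists_shiftExt_chain (hC : FrontOn C S) (h0 : ∅ ∉ C) :
    ∃ u : ℕ → Finset ℕ, (∀ k, u k ∈ C) ∧ ∀ k, ShiftExt (u k) (u (k + 1)) := by
  choose next hnext hshift using fun s : C => hC.exists_shiftExt h0 s.2
  obtain ⟨s₀, hs₀, -⟩ := hC.exists_initSeg S subset_rfl hC.infinite
  let u : ℕ → C := fun n => Nat.rec ⟨s₀, hs₀⟩ (fun _ s => ⟨next s, hnext s⟩) n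
  exact ⟨fun k => (u k).1, fun k => (u k).2, fun k => hshift (u k)⟩

/-- Dropping the points of `r` one at a time gives a shift path between the two segments. -/
lemma apply_eq_of_initSeg_union (hC : FrontOn C S) (h0 : ∅ ∉ C) {σ : Type*}
    {φ : Finset ℕ → σ} (hφ : ForallShiftExt C fun s t => φ s = φ t)
    {Z : Set ℕ} (hZS : Z ⊆ S) (hZ : Z.Infinite) {z : Finset ℕ} (hz : z ∈ C)
    (hzZ : NatInitSeg z Z) (r : Finset ℕ) (hrS : ↑r ⊆ S) (hrZ : ∀ x ∈ Z, ∀ y ∈ r, y < x)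
    {w : Finset ℕ} (hw : w ∈ C) (hwZ : NatInitSeg w (↑r ∪ Z)) : φ w = φ z := by
  induction r using Finset.induction_on_min generalizing w with
  | empty =>
    rw [Finset.coe_empty, empty_union] at hwZ
    rw [hC.initSeg_unique hw hz hwZ hzZ]
  | insert a r har ih =>
    rw [Finset.coe_insert] at hrS
    have hrZ' : ∀ x ∈ Z, ∀ y ∈ r, y < x := fun x hx y hy => hrZ x hx y (Finset.mem_insert_of_mem hy)
    have haY : ∀ y ∈ ↑r ∪ Z, a < y := by
      rintro y (hy | hy)
      · exact har y hy
      · exact hrZ y hy a (Finset.mem_insert_self a r)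
    rw [Finset.coe_insert, insert_union] at hwZ
    obtain ⟨w', hw', hw'Y⟩ := hC.exists_initSeg (↑r ∪ Z)
      (union_subset ((subset_insert _ _).trans hrS) hZS) (hZ.mono subset_union_right)
    rw [hφ w hw w' hw' (hC.shiftExt_of_initSeg_insert h0 haY hw hwZ hw' hw'Y)]
    exact ih ((subset_insert _ _).trans hrS) hrZ' hw' hw'Y

lemma apply_eq_of_forallShiftExt (hC : FrontOn C S) (h0 : ∅ ∉ C) {σ : Type*} {φ : Finset ℕ → σ}
    (hφ : ForallShiftExt C fun s t => φ s = φ t) {s t : Finset ℕ} (hs : s ∈ C)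
    (ht : t ∈ C) : φ s = φ t := by
  set Z := S ∩ Ioi ((s ∪ t).sup id)
  have hZ : ∀ r ⊆ s ∪ t, ∀ x ∈ Z, ∀ y ∈ r, y < x := fun r hr x hx y hy =>
    (Finset.le_sup (f := id) (hr hy)).trans_lt hx.2
  obtain ⟨z, hz, hzZ⟩ := hC.exists_initSeg Z inter_subset_left (hC.infinite.inter_Ioi _)
  have key : ∀ r ∈ C, r ⊆ s ∪ t → φ r = φ z := fun r hr hrst =>
    hC.apply_eq_of_initSeg_union h0 hφ inter_subset_left (hC.infinite.inter_Ioi _) hz hzZ r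
      (hC.subset r hr) (hZ r hrst) hr (natInitSeg_union (hZ r hrst))
  rw [key s hs Finset.subset_union_left, key t ht Finset.subset_union_right]

end FrontOn

lemma finsetLexLt_union_left {r d d' : Finset ℕ} (hd : ∀ x ∈ d, ∀ y ∈ r, y < x)
    (hd' : ∀ x ∈ d', ∀ y ∈ r, y < x) (h : FinsetLexLt d d') :
    FinsetLexLt (r ∪ d) (r ∪ d') := by
  have hsd : symmDiff (r ∪ d) (r ∪ d') = symmDiff d d' := by
    ext x
    have := fun hx hr => (hd x hx x hr).false
    have := fun hx hr => (hd' x hx x hr).false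
    simp only [Finset.mem_symmDiff, Finset.mem_union]
    tauto
  refine ⟨fun heq => h.1 ?_, fun m hm hmin => ?_⟩
  · rw [← symmDiff_eq_bot, ← hsd, heq, symmDiff_self]
  · rw [hsd] at hm hmin
    exact Finset.mem_union_right r (h.2 m hm hmin)

lemma finsetLexLt_of_forall_lt {b b' : Finset ℕ} {a : ℕ} (hab : a ∈ b) (hb : ∀ x ∈ b, a ≤ x)
    (hb' : ∀ x ∈ b', a < x) : FinsetLexLt b b' := by
  have hab' : a ∉ b' := fun h => lt_irrefl a (hb' a h)
  have hsd : a ∈ symmDiff b b' := Finset.mem_symmDiff.2 (Or.inl ⟨hab, hab'⟩)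
  refine ⟨fun h => hab' (h ▸ hab), fun m hm hmin => ?_⟩
  obtain rfl : m = a := le_antisymm (hmin a hsd) <| by
    rcases Finset.mem_symmDiff.1 hm with ⟨h, -⟩ | ⟨h, -⟩
    · exact hb m h
    · exact (hb' m h).le
  exact hab

def link (C : Set (Finset ℕ)) (r : Finset ℕ) (Y : Set ℕ) : Set (Finset ℕ) :=
  {d | ↑d ⊆ Y ∧ r ∪ d ∈ C}

namespace FrontOn

variable {C : Set (Finset ℕ)} {S : Set ℕ}

lemma link (hC : FrontOn C S) {r : Finset ℕ} {Y : Set ℕ} (hrS : ↑r ⊆ S) (hYS : Y ⊆ S)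
    (hY : Y.Infinite) (hrY : ∀ x ∈ Y, ∀ y ∈ r, y < x) (hr : ∀ b ∈ C, ¬ b ⊂ r) :
    FrontOn (link C r Y) Y where
  infinite := hY
  subset _ hd := hd.1
  antichain d₁ hd₁ d₂ hd₂ hsub := by
    have hdisj : ∀ d ∈ _root_.link C r Y, Disjoint r d := fun d hd =>
      Finset.disjoint_right.2 fun x hx hxr => (hrY x (hd.1 hx) x hxr).false
    have := hC.antichain _ hd₁.2 _ hd₂.2 (Finset.union_subset_union_right hsub)
    rw [← Finset.union_sdiff_cancel_left (hdisj d₁ hd₁), this,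
      Finset.union_sdiff_cancel_left (hdisj d₂ hd₂)]
  exists_initSeg Z hZY hZ := by
    have hrZ : ∀ x ∈ Z, ∀ y ∈ r, y < x := fun x hx => hrY x (hZY hx)
    obtain ⟨b, hb, hbZ⟩ := hC.exists_initSeg (↑r ∪ Z) (union_subset hrS (hZY.trans hYS))
      (hZ.mono subset_union_right)
    have hrb : r ⊆ b := by
      rcases (natInitSeg_union hrZ).subset_or_subset_s10 hbZ with h | h
      · exact h
      · exact (h.eq_or_ssubset.resolve_right (hr b hb)).ge
    have hbr : ∀ x ∈ b \ r, x ∈ Z := fun x hx =>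
      (hbZ.1 (Finset.mem_sdiff.1 hx).1).resolve_left (Finset.mem_sdiff.1 hx).2
    refine ⟨b \ r, ⟨fun x hx => hZY (hbr x hx), by rwa [Finset.union_sdiff_of_subset hrb]⟩,
      hbr, fun x hx hxd y hy => hbZ.2 x (Or.inr hx) (fun hxb => hxd ?_) y (Finset.mem_sdiff.1 hy).1⟩
    exact Finset.mem_sdiff.2 ⟨hxb, fun hxr => (hrZ x hx x hxr).false⟩

end FrontOn

lemma barrierTypeLE_link {C : Set (Finset ℕ)} {g : Finset ℕ → Ordinal.{0}}
    (hg : ∀ b₁ ∈ C, ∀ b₂ ∈ C, FinsetLexLt b₁ b₂ → g b₁ < g b₂) {r : Finset ℕ} {Y : Set ℕ}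
    (hrY : ∀ x ∈ Y, ∀ y ∈ r, y < x) {γ : Ordinal.{0}} (hγ : ∀ d ∈ link C r Y, g (r ∪ d) < γ) :
    BarrierTypeLE (link C r Y) γ :=
  ⟨fun d => g (r ∪ d), hγ, fun _ hd₁ _ hd₂ h => hg _ hd₁.2 _ hd₂.2 <|
    finsetLexLt_union_left (fun x hx => hrY x (hd₁.1 hx)) (fun x hx => hrY x (hd₂.1 hx)) h⟩

lemma exists_strictMono_fusion {S : Set ℕ} (hS : S.Infinite) (Good : ℕ → Set ℕ → Prop)
    (hmono : ∀ a Y Y', Y' ⊆ Y → Good a Y → Good a Y')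
    (hstep : ∀ Y ⊆ S, Y.Infinite → ∃ Y' ⊆ Y \ {sInf Y}, Y'.Infinite ∧ Good (sInf Y) Y') :
    ∃ a : ℕ → ℕ, StrictMono a ∧ (∀ n, a n ∈ S) ∧ ∀ n, Good (a n) (a '' Ioi n) := by
  choose next hnext hnextInf hgood using
    fun Y : {Y : Set ℕ // Y ⊆ S ∧ Y.Infinite} => hstep Y.1 Y.2.1 Y.2.2
  let Ys : ℕ → {Y : Set ℕ // Y ⊆ S ∧ Y.Infinite} := fun n => Nat.rec ⟨S, subset_rfl, hS⟩
    (fun _ Y => ⟨next Y, (hnext Y).trans (sdiff_subset.trans Y.2.1), hnextInf Y⟩) n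
  have hsucc : ∀ n, (Ys (n + 1)).1 ⊆ (Ys n).1 \ {sInf (Ys n).1} := fun n => hnext (Ys n)
  have hanti : Antitone fun n => (Ys n).1 :=
    antitone_nat_of_succ_le fun n => (hsucc n).trans sdiff_subset
  have hmem : ∀ n, sInf (Ys n).1 ∈ (Ys n).1 := fun n => Nat.sInf_mem (Ys n).2.2.nonempty
  have hlater : ∀ n m, n < m → sInf (Ys m).1 ∈ (Ys (n + 1)).1 := fun n m h => hanti h (hmem m)
  refine ⟨fun n => sInf (Ys n).1, fun n m h => ?_, fun n => (Ys n).2.1 (hmem n), fun n => ?_⟩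
  · have := hsucc n (hlater n m h)
    exact (Nat.sInf_le this.1).lt_of_ne (Ne.symm this.2)
  · refine hmono _ _ _ ?_ (hgood (Ys n))
    rintro _ ⟨m, hm, rfl⟩
    exact hlater n m hm

namespace FrontOn

variable {C : Set (Finset ℕ)} {S : Set ℕ}

lemma exists_monochromatic_of_min (hC : FrontOn C S) (h0 : ∅ ∉ C) {κ : Type*}
    {c : Finset ℕ → κ} (hc : (c '' C).Finite)
    (hstep : ∀ Y ⊆ S, Y.Infinite → ∃ Y' ⊆ Y \ {sInf Y}, Y'.Infinite ∧ ∃ v ∈ c '' C,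
      ∀ b ∈ C, sInf Y ∈ b → ↑b ⊆ insert (sInf Y) Y' → c b = v) :
    ∃ X ⊆ S, X.Infinite ∧ ∃ v ∈ c '' C, ∀ b ∈ C, ↑b ⊆ X → c b = v := by
  obtain ⟨a, ha, haS, hgood⟩ := exists_strictMono_fusion hC.infinite
    (fun a Y => ∃ v ∈ c '' C, ∀ b ∈ C, a ∈ b → ↑b ⊆ insert a Y → c b = v)
    (fun a Y Y' hY ⟨v, hv, h⟩ => ⟨v, hv, fun b hb hab hbY =>
      h b hb hab (hbY.trans (insert_subset_insert hY))⟩) hstep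
  choose v hvC hv using hgood
  have := hc.to_subtype
  obtain ⟨w, hw⟩ := Finite.exists_infinite_fiber fun n => (⟨v n, hvC n⟩ : c '' C)
  set N := (fun n => (⟨v n, hvC n⟩ : c '' C)) ⁻¹' {w}
  have hvN : ∀ n ∈ N, v n = w.1 := fun n hn => congrArg Subtype.val hn
  refine ⟨a '' N, image_subset_iff.2 fun n _ => haS n,
    (infinite_coe_iff.1 hw).image ha.injective.injOn, w.1, w.2, fun b hb hbX => ?_⟩
  have hbne : b.Nonempty := Finset.nonempty_of_ne_empty (hb.ne_of_notMem h0)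
  obtain ⟨n, hn, hmin⟩ := hbX (b.min'_mem hbne)
  rw [← hvN n hn]
  refine hv n b hb (hmin ▸ b.min'_mem hbne) fun x hx => ?_
  obtain ⟨m, -, rfl⟩ := hbX hx
  rcases (ha.le_iff_le.1 (hmin ▸ b.min'_le _ hx)).eq_or_lt with rfl | hnm
  · exact mem_insert _ _
  · exact mem_insert_of_mem _ ⟨m, hnm, rfl⟩

/-- The Nash-Williams partition theorem, by induction on the rank. -/
theorem exists_monochromatic {β : Ordinal.{0}} (hC : FrontOn C S) (hrank : BarrierTypeLE C β)
    {κ : Type*} (c : Finset ℕ → κ) (hc : (c '' C).Finite) :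
    ∃ X ⊆ S, X.Infinite ∧ ∃ v ∈ c '' C, ∀ b ∈ C, ↑b ⊆ X → c b = v := by
  induction β using WellFoundedLT.induction generalizing C S c with
  | _ β ih =>
  by_cases h0 : ∅ ∈ C
  · refine ⟨S, subset_rfl, hC.infinite, c ∅, mem_image_of_mem c h0, fun b hb _ => ?_⟩
    rw [hC.antichain ∅ h0 b hb b.empty_subset]
  obtain ⟨g, hgβ, hg⟩ := hrank
  refine hC.exists_monochromatic_of_min h0 hc fun Y hYS hY => ?_
  set a := sInf Y
  have haY : ∀ x ∈ Y \ {a}, ∀ y ∈ ({a} : Finset ℕ), y < x := fun x hx y hy =>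
    Finset.mem_singleton.1 hy ▸ (Nat.sInf_le hx.1).lt_of_ne (Ne.symm hx.2)
  have hYS' : Y \ {a} ⊆ S := sdiff_subset.trans hYS
  have hY' : (Y \ {a}).Infinite := hY.sdiff (finite_singleton a)
  obtain ⟨b₀, hb₀, hb₀Y⟩ := hC.exists_initSeg _ hYS' hY'
  have hL := hC.link (by simpa using hYS (Nat.sInf_mem hY.nonempty)) hYS' hY' haY
    fun b hb hba => h0 (Finset.ssubset_singleton_iff.1 hba ▸ hb)
  -- every `{a} ∪ d` is lexicographically below `b₀`, so the rank drops below `g b₀ < β`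
  have hLrank := barrierTypeLE_link hg haY (γ := g b₀) fun d hd => hg _ hd.2 _ hb₀ <|
    finsetLexLt_of_forall_lt (Finset.mem_union_left _ (Finset.mem_singleton_self a))
      (fun x hx => (Finset.mem_union.1 hx).elim (fun h => (Finset.mem_singleton.1 h).ge)
        fun h => (haY x (hd.1 h) a (Finset.mem_singleton_self a)).le)
      fun x hx => haY x (hb₀Y.1 hx) a (Finset.mem_singleton_self a)
  obtain ⟨X, hXY, hX, _, ⟨d, hd, rfl⟩, hv⟩ := ih _ (hgβ b₀ hb₀) hL hLrank
    (fun d => c ({a} ∪ d)) (hc.subset (image_subset_iff.2 fun d hd => mem_image_of_mem c hd.2))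
  refine ⟨X, hXY, hX, _, mem_image_of_mem c hd.2, fun b hb hab hbX => ?_⟩
  have hb' : {a} ∪ b.erase a = b := by rw [← Finset.insert_eq, Finset.insert_erase hab]
  have hbX' : ↑(b.erase a) ⊆ X := fun x hx =>
    (hbX (Finset.mem_of_mem_erase hx)).resolve_left (Finset.ne_of_mem_erase hx)
  have := hv (b.erase a) ⟨hbX'.trans hXY, hb'.symm ▸ hb⟩ hbX'
  rwa [hb'] at this

end FrontOn

namespace FrontOn

variable {C : Set (Finset ℕ)} {S : Set ℕ} {α : Ordinal.{0}} {ι : Type*}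

lemma exists_witness_stable_at (hC : FrontOn C S) (hrank : BarrierTypeLE C α) {s : Finset ℕ}
    (hs : s ∈ C) (hsne : s.Nonempty) {A : Set ι} (hA : A.Finite) {Q : Finset ℕ → ι → Prop}
    (hQ : ∀ t ∈ C, ShiftExt s t → ∃ i ∈ A, Q t i) {Y : Set ℕ} (hYS : Y ⊆ S) (hY : Y.Infinite)
    (hsY : ∀ x ∈ Y, ∀ y ∈ s, y < x) :
    ∃ Y' ⊆ Y, Y'.Infinite ∧ ∃ i, ∀ t ∈ C, ShiftExt s t → ↑(t \ s) ⊆ Y' → Q t i := by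
  set r := s.erase (s.min' hsne)
  have hrs : r ⊂ s := Finset.erase_ssubset (s.min'_mem hsne)
  have hrC : ∀ b ∈ C, ¬ b ⊂ r := fun b hb hbr => (hbr.trans hrs).ne (hC.antichain b hb s hs
    (hbr.trans hrs).subset)
  have hrY : ∀ x ∈ Y, ∀ y ∈ r, y < x := fun x hx y hy => hsY x hx y (hrs.subset hy)
  have hL := hC.link ((Finset.coe_subset.2 hrs.subset).trans (hC.subset s hs)) hYS hY hrY hrC
  have hshift : ∀ d ∈ _root_.link C r Y, ShiftExt s (r ∪ d) := fun d hd =>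
    shiftExt_erase_min'_union hsne (Finset.nonempty_iff_ne_empty.2 fun h => hrs.ne
      (hC.antichain r (by simpa [h] using hd.2) s hs hrs.subset)) fun x hx => hsY x (hd.1 hx)
  obtain ⟨g, hgα, hg⟩ := hrank
  -- colouring `d` by its whole set of witnesses keeps the number of colours finite
  obtain ⟨X, hXY, hX, _, ⟨d, hd, rfl⟩, hv⟩ := hL.exists_monochromatic
    (barrierTypeLE_link hg hrY fun d hd => hgα _ hd.2) (fun d => {i ∈ A | Q (r ∪ d) i})
    (hA.finite_subsets.subset (image_subset_iff.2 fun _ _ => sep_subset _ _))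
  obtain ⟨i, hiA, hi⟩ := hQ _ hd.2 (hshift d hd)
  refine ⟨X, hXY, hX, i, fun t ht hst htX => ?_⟩
  have ht : r ∪ (t \ s) = t := hst.erase_min'_union_sdiff
  have hmem : i ∈ {i ∈ A | Q (r ∪ (t \ s)) i} :=
    (hv (t \ s) ⟨htX.trans hXY, ht.symm ▸ ‹t ∈ C›⟩ htX).symm ▸ ⟨hiA, hi⟩
  exact ht ▸ hmem.2

lemma exists_witness_stable_on (hC : FrontOn C S) (h0 : ∅ ∉ C) (hrank : BarrierTypeLE C α)
    {A : Finset ℕ → Set ι} (hA : ∀ s ∈ C, (A s).Finite) {R : Finset ℕ → Finset ℕ → ι → Prop}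
    (hR : ForallShiftExt C fun s t => ∃ i ∈ A s, R s t i) (F : Finset (Finset ℕ))
    {Y : Set ℕ} (hYS : Y ⊆ S) (hY : Y.Infinite) (hFY : ∀ s ∈ F, ∀ x ∈ Y, ∀ y ∈ s, y < x) :
    ∃ Y' ⊆ Y, Y'.Infinite ∧
      ∀ s ∈ F, s ∈ C → ∃ i, ∀ t ∈ C, ShiftExt s t → ↑(t \ s) ⊆ Y' → R s t i := by
  classical
  induction F using Finset.induction_on with
  | empty => exact ⟨Y, subset_rfl, hY, by simp⟩
  | insert s F _ ih =>
    obtain ⟨Y₁, hY₁Y, hY₁, hF⟩ := ih fun u hu => hFY u (Finset.mem_insert_of_mem hu)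
    by_cases hs : s ∈ C
    · obtain ⟨Y₂, hY₂Y₁, hY₂, i, hi⟩ := hC.exists_witness_stable_at hrank hs
        (Finset.nonempty_of_ne_empty (hs.ne_of_notMem h0)) (hA s hs) (hR s hs)
        (hY₁Y.trans hYS) hY₁ fun x hx => hFY s (Finset.mem_insert_self s F) x (hY₁Y hx)
      refine ⟨Y₂, hY₂Y₁.trans hY₁Y, hY₂, fun u hu huC => ?_⟩
      rcases Finset.mem_insert.1 hu with rfl | hu
      · exact ⟨i, hi⟩
      · obtain ⟨j, hj⟩ := hF u hu huC
        exact ⟨j, fun t ht hut htY => hj t ht hut (htY.trans hY₂Y₁)⟩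
    · refine ⟨Y₁, hY₁Y, hY₁, fun u hu huC => ?_⟩
      rcases Finset.mem_insert.1 hu with rfl | hu
      · exact absurd huC hs
      · exact hF u hu huC

theorem exists_uniform_witness (hC : FrontOn C S) (h0 : ∅ ∉ C) (hrank : BarrierTypeLE C α)
    {A : Finset ℕ → Set ι} (hA : ∀ s ∈ C, (A s).Finite) {R : Finset ℕ → Finset ℕ → ι → Prop}
    (hR : ForallShiftExt C fun s t => ∃ i ∈ A s, R s t i) :
    ∃ X ⊆ S, X.Infinite ∧
      ∃ φ : Finset ℕ → ι, ForallShiftExt (restrictTo C X) fun s t => R s t (φ s) := by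
  -- at each fusion point `a`, stabilise the witnesses of all `s ⊆ {0, …, a}` at once
  obtain ⟨a, ha, haS, hgood⟩ := exists_strictMono_fusion hC.infinite
    (fun a Y => ∀ s ∈ (Finset.range (a + 1)).powerset, s ∈ C →
      ∃ i, ∀ t ∈ C, ShiftExt s t → ↑(t \ s) ⊆ Y → R s t i)
    (fun a Y Y' hY h s hs hsC => (h s hs hsC).imp fun i hi t ht hst htY =>
      hi t ht hst (htY.trans hY))
    fun Y hYS hY => hC.exists_witness_stable_on h0 hrank hA hR _ (sdiff_subset.trans hYS)
      (hY.sdiff (finite_singleton _)) fun s hs x hx y hy =>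
        (Nat.lt_succ_iff.1 (Finset.mem_range.1 (Finset.mem_powerset.1 hs hy))).trans_lt
          ((Nat.sInf_le hx.1).lt_of_ne (Ne.symm hx.2))
  have hstable : ∀ s ∈ restrictTo C (range a),
      ∃ i, ∀ t ∈ restrictTo C (range a), ShiftExt s t → R s t i := by
    rintro s ⟨hs, hsX⟩
    have hsne : s.Nonempty := Finset.nonempty_of_ne_empty (hs.ne_of_notMem h0)
    obtain ⟨n, hn⟩ := hsX (s.max'_mem hsne)
    have hsn : s ∈ (Finset.range (a n + 1)).powerset := Finset.mem_powerset.2 fun y hy =>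
      Finset.mem_range.2 (Nat.lt_succ_of_le (hn ▸ s.le_max' y hy))
    refine (hgood n s hsn hs).imp fun i hi t ⟨ht, htX⟩ hst => hi t ht hst fun x hx => ?_
    obtain ⟨m, rfl⟩ := htX (Finset.mem_sdiff.1 hx).1
    exact ⟨m, ha.lt_iff_lt.1 (hn ▸ hst.lt_of_mem_sdiff _ hx _ (s.max'_mem hsne)), rfl⟩
  have : Nonempty ι := by
    obtain ⟨s, hs, -⟩ := hC.exists_initSeg S subset_rfl hC.infinite
    obtain ⟨t, ht, hst⟩ := hC.exists_shiftExt h0 hs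
    obtain ⟨i, -⟩ := hR s hs t ht hst
    exact ⟨i⟩
  choose φ hφ using fun s => (em (s ∈ restrictTo C (range a))).elim
    (fun h => (hstable s h).imp fun i hi _ => hi)
    fun h => ⟨Classical.arbitrary ι, fun h' => absurd h' h⟩
  exact ⟨range a, range_subset_iff.2 haS, infinite_range_of_injective ha.injective, φ,
    fun s hs t ht hst => hφ s hs t ht hst⟩

/-- Ramsey's theorem for shift pairs. -/
theorem exists_homogeneous (hC : FrontOn C S) (h0 : ∅ ∉ C) (hrank : BarrierTypeLE C α)
    {X : Set ℕ} (hXS : X ⊆ S) (hX : X.Infinite) (Q : Finset ℕ → Finset ℕ → Prop) :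
    ∃ Y ⊆ X, Y.Infinite ∧ (ForallShiftExt (restrictTo C Y) Q ∨
      ForallShiftExt (restrictTo C Y) fun s t => ¬ Q s t) := by
  have hCX := hC.restrict hXS hX
  have hrankX := hrank.mono (restrictTo_subset (X := X))
  obtain ⟨X₁, hX₁X, hX₁, φ, hφ⟩ := hCX.exists_uniform_witness (fun h => h0 h.1) hrankX
    (A := fun _ => univ) (fun _ _ => toFinite _) (R := fun s t p => (Q s t ↔ p))
    fun s _ t _ _ => ⟨_, trivial, Iff.rfl⟩
  obtain ⟨Y, hYX₁, hY, v, -, hv⟩ := (hCX.restrict hX₁X hX₁).exists_monochromatic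
    (hrankX.mono restrictTo_subset) φ (toFinite _)
  have hmem : ∀ s ∈ restrictTo C Y, s ∈ restrictTo (restrictTo C X) X₁ := fun s hs =>
    ⟨⟨hs.1, hs.2.trans (hYX₁.trans hX₁X)⟩, hs.2.trans hYX₁⟩
  have hQ : ForallShiftExt (restrictTo C Y) fun s t => (Q s t ↔ v) := fun s hs t ht hst =>
    hv s (hmem s hs) hs.2 ▸ hφ s (hmem s hs) t (hmem t ht) hst
  refine ⟨Y, hYX₁.trans hX₁X, hY, (em v).imp (fun h s hs t ht hst => ?_) fun h s hs t ht hst => ?_⟩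
  · exact (hQ s hs t ht hst).2 h
  · exact mt (hQ s hs t ht hst).1 h

end FrontOn

section DressSchiffels

variable {I : Type*} {P : I → Type*}

lemma eq_of_maximal_ne_of_lt [Preorder I] {f g : ∀ i, P i} {i j : I}
    (hi : Maximal (fun j => f j ≠ g j) i) (hij : i < j) : f j = g j :=
  by_contra fun h => hij.not_ge (hi.2 h hij.le)

/-- A coordinate strictly above a maximal point of `Δ(f k, f (k+1))` is unchanged from `f k` to
`f (k+1)`, so all the points `ι l` stay in the support of `f 0`. -/
lemma infinite_support_of_strictMono [Preorder I] [∀ i, Bot (P i)] {f : ℕ → ∀ i, P i}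
    {ι : ℕ → I} (hι : StrictMono ι) (hmax : ∀ k, Maximal (fun j => f k j ≠ f (k + 1) j) (ι k))
    (hne : ∀ k, f k (ι k) ≠ ⊥) : {i | f 0 i ≠ ⊥}.Infinite := by
  have hstable : ∀ d k, f k (ι (k + d)) = f (k + d) (ι (k + d)) := by
    intro d
    induction d with
    | zero => exact fun _ => rfl
    | succ d ih =>
      intro k
      rw [eq_of_maximal_ne_of_lt (hmax k) (hι (by omega)), ← add_assoc, add_right_comm, ih]
  refine (infinite_range_of_injective hι.injective).mono ?_
  rintro _ ⟨l, rfl⟩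
  have := hstable l 0
  rw [zero_add] at this
  exact fun h => hne l (this.symm.trans h)

variable [PartialOrder I] [∀ i, PartialOrder (P i)]

def DSFailsAt (f g : ∀ i, P i) (i : I) : Prop :=
  Maximal (fun j => f j ≠ g j) i ∧ ¬ f i < g i

lemma not_DSle_iff {f g : ∀ i, P i} : ¬ DSle f g ↔ ∃ i, DSFailsAt f g i := by
  simp only [DSle, DSFailsAt, not_forall, exists_prop]

variable {D : Set (Finset ℕ)} {X : Set ℕ}

lemma FrontOn.not_forallShiftExt_dsFailsAt_of_eq {α : Ordinal.{0}} (hD : FrontOn D X)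
    (h0 : ∅ ∉ D) (hrank : BarrierTypeLE D α)
    (hP : ∀ i, IsAlphaWqoRel ((· ≤ ·) : P i → P i → Prop) α) (F : Finset ℕ → ∀ i, P i)
    {ι₀ : Finset ℕ → I} (heq : ForallShiftExt D fun s t => ι₀ s = ι₀ t) :
    ¬ ForallShiftExt D fun s t => DSFailsAt (F s) (F t) (ι₀ s) := by
  intro hfail
  obtain ⟨s₀, hs₀, -⟩ := hD.exists_initSeg X subset_rfl hD.infinite
  obtain ⟨s, hs, t, ht, hst, hle⟩ :=
    hP (ι₀ s₀) D (hD.isBarrier h0) hrank fun b => F b (ι₀ s₀)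
  have hfst : DSFailsAt (F s) (F t) (ι₀ s) := hfail s hs t ht hst
  rw [hD.apply_eq_of_forallShiftExt h0 heq hs hs₀] at hfst
  exact hfst.2 (hle.lt_of_ne hfst.1.1)

variable [∀ i, OrderBot (P i)]

lemma DSFailsAt.ne_bot {f g : ∀ i, P i} {i : I} (h : DSFailsAt f g i) :
    f i ≠ ⊥ := fun hf => h.2 (hf ▸ bot_lt_iff_ne_bot.2 fun hg => h.1.1 (hf.trans hg.symm))

lemma FrontOn.not_forallShiftExt_dsFailsAt_of_lt (hD : FrontOn D X) (h0 : ∅ ∉ D)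
    (F : Finset ℕ → DSProd I P) {ι₀ : Finset ℕ → I}
    (hlt : ForallShiftExt D fun s t => ι₀ s < ι₀ t) :
    ¬ ForallShiftExt D fun s t => DSFailsAt (F s).1 (F t).1 (ι₀ s) := by
  intro hfail
  obtain ⟨u, hu, hshift⟩ := hD.exists_shiftExt_chain h0
  have hfail' := fun k => hfail _ (hu k) _ (hu (k + 1)) (hshift k)
  exact infinite_support_of_strictMono (f := fun k => (F (u k)).1)
    (strictMono_nat_of_lt_succ fun k => hlt _ (hu k) _ (hu (k + 1)) (hshift k))
    (fun k => (hfail' k).1) (fun k => (hfail' k).ne_bot) (F (u 0)).2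

end DressSchiffels

theorem stmt_10_general {I : Type u} [PartialOrder I] {P : I → Type v} [∀ i, PartialOrder (P i)]
    [∀ i, OrderBot (P i)] (α : Ordinal.{0})
    (hI : IsAlphaWqoRel ((· ≤ ·) : I → I → Prop) α)
    (hP : ∀ i, IsAlphaWqoRel ((· ≤ ·) : P i → P i → Prop) α) :
    IsAlphaWqoRel (fun f g : DSProd I P => DSle f.1 g.1) α := by
  intro B hB hrank F
  by_contra hgood
  have hbad : ForallShiftExt B fun s t =>
      ∃ i ∈ {i | (F s).1 i ≠ ⊥}, DSFailsAt (F s).1 (F t).1 i := fun s hs t ht hst =>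
    (not_DSle_iff.1 fun h => hgood ⟨s, hs, t, ht, hst, h⟩).imp fun i hi => ⟨hi.ne_bot, hi⟩
  have hC := hB.frontOn
  have h0 := hB.empty_notMem_s10
  obtain ⟨X, hXS, hX, ι₀, hι₀⟩ := hC.exists_uniform_witness h0 hrank (fun s _ => (F s).2) hbad
  obtain ⟨Y, hYX, hY, hle | hnle⟩ := hC.exists_homogeneous h0 hrank hXS hX fun s t => ι₀ s ≤ ι₀ t
  · obtain ⟨Z, hZY, hZ, hZeq⟩ :=
      hC.exists_homogeneous h0 hrank (hYX.trans hXS) hY fun s t => ι₀ s = ι₀ t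
    have hZX := hZY.trans hYX
    have hCZ := hC.restrict (hZX.trans hXS) hZ
    rcases hZeq with heq | hne
    · exact hCZ.not_forallShiftExt_dsFailsAt_of_eq (fun h => h0 h.1)
        (hrank.mono restrictTo_subset) hP _ heq (hι₀.mono (restrictTo_mono hZX))
    · exact hCZ.not_forallShiftExt_dsFailsAt_of_lt (fun h => h0 h.1) F
        (fun s hs t ht hst => (hle s (restrictTo_mono hZY hs) t (restrictTo_mono hZY ht)
          hst).lt_of_ne (hne s hs t ht hst)) (hι₀.mono (restrictTo_mono hZX))
  · obtain ⟨s, hs, t, ht, hst, h⟩ :=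
      hI _ ((hC.restrict (hYX.trans hXS) hY).isBarrier fun h => h0 h.1)
        (hrank.mono restrictTo_subset) ι₀
    exact hnle s hs t ht hst h

/-- For a countable ordinal `α ≥ ω`: if `I` is `α`-wqo and every `P i` is `α`-wqo, then
the Dress–Schiffels product is `α`-wqo. -/
theorem stmt_10 {I : Type u} [PartialOrder I] {P : I → Type v} [∀ i, PartialOrder (P i)]
    [∀ i, OrderBot (P i)] (α : Ordinal.{0})
    (hαω : Ordinal.omega0 ≤ α) (hαc : α.card ≤ Cardinal.aleph0)
    (hI : IsAlphaWqoRel ((· ≤ ·) : I → I → Prop) α)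
    (hP : ∀ i, IsAlphaWqoRel ((· ≤ ·) : P i → P i → Prop) α) :
    IsAlphaWqoRel (fun f g : DSProd I P => DSle f.1 g.1) α :=
  stmt_10_general α hI hP
end
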